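/- arXiv:1909.02286 — 10 statements merged into one kernel-verified Lean document; each statement's English description precedes it below -/
import Mathlib

section
/- For all φ ∈ C_c(X) and f ∈ F(X), one has ∑_{x∈X} f(x)² φ(x) Δφ(x) = ∑_{x∈X} |∇(fφ)|²(x) − (1/2) ∑_{x,y∈X} b(x,y) φ(x) φ(y) (f(x)−f(y))². -/
open Real

private lemma aux1 {X : Type*} (b : X → X → ℝ)
    (hnonneg : ∀ x y, 0 ≤ b x y)
    (hloc : ∀ x, Summable (fun y => b x y))
    (c : X → ℝ) (hc : ∀ x, 0 ≤ c x) (hcs : (Function.support c).Finite) :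
    Summable (fun p : X × X => b p.1 p.2 * c p.1) := by
  rw [summable_prod_of_nonneg (fun p => mul_nonneg (hnonneg _ _) (hc _))]
  refine ⟨fun x => (hloc x).mul_right (c x), ?_⟩
  apply summable_of_ne_finset_zero (s := hcs.toFinset)
  intro x hx
  simp only [Set.Finite.mem_toFinset, Function.mem_support, not_not] at hx
  simp [hx]

private lemma aux2 {X : Type*} (b : X → X → ℝ)
    (hsymm : ∀ x y, b x y = b y x)
    (hnonneg : ∀ x y, 0 ≤ b x y)
    (hloc : ∀ x, Summable (fun y => b x y))
    (c : X → ℝ) (hc : ∀ x, 0 ≤ c x) (hcs : (Function.support c).Finite) :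
    Summable (fun p : X × X => b p.1 p.2 * c p.2) := by
  have h := aux1 (fun x y => b y x) (fun x y => hnonneg y x)
    (fun x => by simpa only [fun y => hsymm y x] using hloc x) c hc hcs
  have := (Equiv.prodComm X X).summable_iff
    (f := fun p : X × X => b p.1 p.2 * c p.2)
  exact this.mp h

theorem stmt0
    (X : Type*) [Countable X]
    (b : X → X → ℝ)
    (hsymm : ∀ x y, b x y = b y x)
    (hdiag : ∀ x, b x x = 0)
    (hnonneg : ∀ x y, 0 ≤ b x y)
    (hloc : ∀ x, Summable (fun y => b x y))
    (φ f : X → ℝ)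
    (hφ : (Function.support φ).Finite)
    (hf : ∀ x, Summable (fun y => b x y * |f y|)) :
    (∑' x, (f x) ^ 2 * φ x * (∑' y, b x y * (φ x - φ y)))
      = (∑' x, (1 / 2) * ∑' y, b x y * (f x * φ x - f y * φ y) ^ 2)
        - (1 / 2) * ∑' x, ∑' y, b x y * φ x * φ y * (f x - f y) ^ 2 := by
  classical
  set S : Finset X := hφ.toFinset with hSdef
  set G : X × X → ℝ := fun p => b p.1 p.2 * (f p.1 ^ 2 * φ p.1 * (φ p.1 - φ p.2))
    with hGdef
  set H1 : X × X → ℝ := fun p => (1 / 2) * (b p.1 p.2 * (f p.1 * φ p.1 - f p.2 * φ p.2) ^ 2)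
    with hH1def
  set H2 : X × X → ℝ := fun p => (1 / 2) * (b p.1 p.2 * φ p.1 * φ p.2 * (f p.1 - f p.2) ^ 2)
    with hH2def
  set C : ℝ := ∑ x ∈ S, |φ x| with hCdef
  have hCnn : 0 ≤ C := Finset.sum_nonneg fun _ _ => abs_nonneg _
  have hCb : ∀ y, |φ y| ≤ C := by
    intro y
    by_cases hy : y ∈ S
    · exact Finset.single_le_sum (f := fun x => |φ x|) (fun _ _ => abs_nonneg _) hy
    · have : φ y = 0 := by
        by_contra h
        exact hy (by simp [hSdef, Function.mem_support, h])
      simp [this, hCnn]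
  -- Summability of G
  have hGsum : Summable G := by
    apply Summable.of_abs
    have hmaj : Summable (fun p : X × X => b p.1 p.2 * (f p.1 ^ 2 * |φ p.1| * (|φ p.1| + C))) := by
      apply aux1 b hnonneg hloc (fun x => f x ^ 2 * |φ x| * (|φ x| + C))
      · intro x; positivity
      · apply hφ.subset
        intro x hx
        simp only [Function.mem_support] at hx ⊢
        intro h; apply hx; simp [h]
    apply Summable.of_nonneg_of_le (fun p => abs_nonneg _) _ hmaj
    rintro ⟨x, y⟩
    simp only [hGdef, abs_mul, abs_of_nonneg (hnonneg x y)]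
    have h1 : |f x ^ 2| = f x ^ 2 := abs_of_nonneg (sq_nonneg _)
    have h2 : |φ x - φ y| ≤ |φ x| + C := by
      have := abs_sub (φ x) (φ y)
      nlinarith [hCb y]
    rw [h1]
    apply mul_le_mul_of_nonneg_left _ (hnonneg x y)
    apply mul_le_mul_of_nonneg_left h2
    positivity
  -- Summability of H1
  have hsuppu : (Function.support fun x => (f x * φ x) ^ 2).Finite := by
    apply hφ.subset
    intro x hx
    simp only [Function.mem_support] at hx ⊢
    intro h; apply hx; simp [h]
  have hH1sum : Summable H1 := by
    have hmaj : Summable (fun p : X × X =>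
        b p.1 p.2 * (f p.1 * φ p.1) ^ 2 + b p.1 p.2 * (f p.2 * φ p.2) ^ 2) := by
      apply Summable.add
      · exact aux1 b hnonneg hloc (fun x => (f x * φ x) ^ 2) (fun x => sq_nonneg _) hsuppu
      · exact aux2 b hsymm hnonneg hloc (fun x => (f x * φ x) ^ 2) (fun x => sq_nonneg _) hsuppu
    apply Summable.of_nonneg_of_le _ _ hmaj
    · intro p
      simp only [hH1def]
      exact mul_nonneg (by norm_num) (mul_nonneg (hnonneg _ _) (sq_nonneg _))
    · rintro ⟨x, y⟩
      simp only [hH1def]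
      nlinarith [hnonneg x y, sq_nonneg (f x * φ x + f y * φ y), sq_nonneg (f x * φ x - f y * φ y)]
  -- Summability of H2
  have hH2sum : Summable H2 := by
    apply summable_of_ne_finset_zero (s := S ×ˢ S)
    rintro ⟨x, y⟩ hp
    simp only [Finset.mem_product, not_and_or] at hp
    rcases hp with h | h
    · have : φ x = 0 := by
        by_contra hne; exact h (by simp [hSdef, Function.mem_support, hne])
      simp [hH2def, this]
    · have : φ y = 0 := by
        by_contra hne; exact h (by simp [hSdef, Function.mem_support, hne])
      simp [hH2def, this]
  -- Step 1: LHS = iterated sum of G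
  have hL : (∑' x, (f x) ^ 2 * φ x * (∑' y, b x y * (φ x - φ y)))
      = ∑' x, ∑' y, G (x, y) := by
    apply tsum_congr
    intro x
    rw [← tsum_mul_left]
    apply tsum_congr
    intro y
    simp only [hGdef]; ring
  -- Step 2: iterated sum of G = sum over product
  have hGprod : ∑' x, ∑' y, G (x, y) = ∑' p : X × X, G p := (Summable.tsum_prod hGsum).symm
  -- Step 3: symmetrization
  have hGswapSum : Summable (fun p : X × X => G p.swap) :=
    ((Equiv.prodComm X X).summable_iff (f := G)).mpr hGsum
  have hswap : ∑' p : X × X, G p.swap = ∑' p : X × X, G p :=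
    (Equiv.prodComm X X).tsum_eq G
  have hptwise : ∀ p : X × X, G p + G p.swap = 2 * (H1 p - H2 p) := by
    rintro ⟨x, y⟩
    simp only [hGdef, hH1def, hH2def, Prod.swap]
    rw [hsymm y x]
    ring
  have hkey : ∑' p : X × X, G p = ∑' p : X × X, (H1 p - H2 p) := by
    have h2 : (2 : ℝ) * ∑' p : X × X, G p = 2 * ∑' p : X × X, (H1 p - H2 p) := by
      calc (2 : ℝ) * ∑' p : X × X, G p
          = ∑' p : X × X, G p + ∑' p : X × X, G p.swap := by rw [hswap]; ring
        _ = ∑' p : X × X, (G p + G p.swap) := (Summable.tsum_add hGsum hGswapSum).symm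
        _ = ∑' p : X × X, 2 * (H1 p - H2 p) := tsum_congr hptwise
        _ = 2 * ∑' p : X × X, (H1 p - H2 p) := tsum_mul_left
    linarith
  have hsplit : ∑' p : X × X, (H1 p - H2 p)
      = (∑' p : X × X, H1 p) - ∑' p : X × X, H2 p := Summable.tsum_sub hH1sum hH2sum
  -- Step 4: convert product sums back to iterated sums
  have hH1prod : ∑' p : X × X, H1 p = ∑' x, ∑' y, H1 (x, y) := Summable.tsum_prod hH1sum
  have hH2prod : ∑' p : X × X, H2 p = ∑' x, ∑' y, H2 (x, y) := Summable.tsum_prod hH2sum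
  have hRHS1 : (∑' x, (1 / 2 : ℝ) * ∑' y, b x y * (f x * φ x - f y * φ y) ^ 2)
      = ∑' x, ∑' y, H1 (x, y) := by
    apply tsum_congr; intro x
    rw [← tsum_mul_left]
  have hRHS2 : (1 / 2 : ℝ) * (∑' x, ∑' y, b x y * φ x * φ y * (f x - f y) ^ 2)
      = ∑' x, ∑' y, H2 (x, y) := by
    rw [← tsum_mul_left]
    apply tsum_congr; intro x
    rw [← tsum_mul_left]
  rw [hL, hGprod, hkey, hsplit, hH1prod, hH2prod, hRHS1, ← hRHS2]
end

section
/- Suppose w: X → (0,∞) is a Hardy weight, i.e. ∑_X |∇φ|² ≥ ∑_X w φ² for all φ ∈ C_c(X). If there exists a strictly positive g ∈ F(X) and 0 < γ < 1 with |∇(g^{1/2})|² ≤ γ g w pointwise on X, then for all φ ∈ C_c(X): (∑_{x ∈ supp φ} (g(x)/w(x)) (Δφ(x))²)^{1/2} ≥ (1−γ) (∑_X g w φ²)^{1/2}. -/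
open Real

theorem stmt1
    (X : Type*) [Countable X]
    (b : X → X → ℝ)
    (hsymm : ∀ x y, b x y = b y x)
    (hdiag : ∀ x, b x x = 0)
    (hnonneg : ∀ x y, 0 ≤ b x y)
    (hloc : ∀ x, Summable (fun y => b x y))
    (w : X → ℝ) (hw : ∀ x, 0 < w x)
    (hHardy : ∀ ψ : X → ℝ, (Function.support ψ).Finite →
      (∑' x, (1 / 2) * ∑' y, b x y * (ψ x - ψ y) ^ 2) ≥ ∑' x, w x * ψ x ^ 2)
    (g : X → ℝ) (hg : ∀ x, 0 < g x)
    (hgF : ∀ x, Summable (fun y => b x y * |g y|))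
    (γ : ℝ) (hγ0 : 0 < γ) (hγ1 : γ < 1)
    (heik : ∀ x, (1 / 2) * ∑' y, b x y * (Real.sqrt (g x) - Real.sqrt (g y)) ^ 2
      ≤ γ * g x * w x)
    (φ : X → ℝ) (hφ : (Function.support φ).Finite) :
    Real.sqrt (∑' x, if φ x = 0 then 0 else
        (g x / w x) * (∑' y, b x y * (φ x - φ y)) ^ 2)
      ≥ (1 - γ) * Real.sqrt (∑' x, g x * w x * φ x ^ 2) := by
  classical
  set K : Finset X := hφ.toFinset with hKdef
  have hKmem : ∀ x : X, x ∈ K ↔ φ x ≠ 0 := by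
    intro x; simp [hKdef, Function.mem_support]
  have hφ0 : ∀ x ∉ K, φ x = 0 := by
    intro x hx; by_contra hc; exact hx ((hKmem x).2 hc)
  set h : X → ℝ := fun x => Real.sqrt (g x) with hhdef
  have hh2 : ∀ x, h x ^ 2 = g x := fun x => Real.sq_sqrt (hg x).le
  set ψ : X → ℝ := fun x => h x * φ x with hψdef
  have hψ0 : ∀ x ∉ K, ψ x = 0 := fun x hx => by
    simp [hψdef, hφ0 x hx]
  have hψsq : ∀ x, ψ x ^ 2 = g x * φ x ^ 2 := fun x => by
    simp only [hψdef]; rw [mul_pow, hh2]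
  set Δ : X → ℝ := fun x => ∑' y, b x y * (φ x - φ y) with hΔdef
  set d : X → ℝ := fun x => ∑' y, b x y with hddef
  -- basic summability facts
  have sbg : ∀ x, Summable fun y => b x y * g y := by
    intro x
    have := hgF x
    refine this.congr fun y => ?_
    rw [abs_of_pos (hg y)]
  have sbx : ∀ y, Summable fun x => b x y := by
    intro y
    exact (hloc y).congr fun x => (hsymm y x)
  have sKf : ∀ (F : X → ℝ), (∀ y, y ∉ K → F y = 0) →
      ∀ x, Summable fun y => b x y * F y := by
    intro F hF x
    exact summable_of_ne_finset_zero (s := K) fun y hy => by rw [hF y hy, mul_zero]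
  -- Δ summable and formula
  have sΔ : ∀ x, Summable fun y => b x y * (φ x - φ y) := by
    intro x
    have h1 : Summable fun y => φ x * b x y := (hloc x).mul_left _
    have h2 : Summable fun y => b x y * φ y := sKf φ hφ0 x
    exact (h1.sub h2).congr fun y => by ring
  have hΔeq : ∀ x, Δ x = φ x * d x - ∑ y ∈ K, b x y * φ y := by
    intro x
    have h1 : Summable fun y => φ x * b x y := (hloc x).mul_left _
    have h2 : Summable fun y => b x y * φ y := sKf φ hφ0 x
    have : Δ x = ∑' y, (φ x * b x y - b x y * φ y) := tsum_congr fun y => by ring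
    rw [this, Summable.tsum_sub h1 h2, tsum_mul_left, tsum_eq_sum (s := K)
      (f := fun y => b x y * φ y) (fun y hy => by simp [hφ0 y hy])]
  -- pointwise algebraic identity
  have hpt : ∀ x y, b x y * (ψ x - ψ y) ^ 2 =
      b x y * ((g x * φ x - g y * φ y) * (φ x - φ y)) +
      b x y * (φ x * φ y * (h x - h y) ^ 2) := by
    intro x y
    simp only [hψdef]
    rw [← hh2 x, ← hh2 y]
    ring
  -- inner summabilities
  have sQin : ∀ x, Summable fun y => b x y * (φ x * φ y * (h x - h y) ^ 2) := by
    intro x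
    exact summable_of_ne_finset_zero (s := K) fun y hy => by
      rw [hφ0 y hy]; ring
  have spsi : ∀ x, Summable fun y => b x y * (ψ x - ψ y) ^ 2 := by
    intro x
    have hsum : Summable fun y => 2 * ψ x ^ 2 * b x y + b x y * (2 * ψ y ^ 2) := by
      refine ((hloc x).mul_left _).add ?_
      exact summable_of_ne_finset_zero (s := K) fun y hy => by
        rw [hψ0 y hy]; ring
    refine Summable.of_nonneg_of_le (fun y => mul_nonneg (hnonneg x y) (sq_nonneg _))
      (fun y => ?_) hsum
    have h2 : (ψ x - ψ y) ^ 2 ≤ 2 * ψ x ^ 2 + 2 * ψ y ^ 2 := by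
      nlinarith [sq_nonneg (ψ x + ψ y)]
    have := mul_le_mul_of_nonneg_left h2 (hnonneg x y)
    nlinarith [this]
  have sPin : ∀ x, Summable fun y => b x y * ((g x * φ x - g y * φ y) * (φ x - φ y)) := by
    intro x
    refine ((spsi x).sub (sQin x)).congr fun y => ?_
    rw [hpt x y]; ring
  -- outer summability of the energy
  have SA : Summable fun x => ∑' y, b x y * (ψ x - ψ y) ^ 2 := by
    have hFsum : Summable fun x => 2 * ψ x ^ 2 * d x + ∑ y ∈ K, b x y * (2 * ψ y ^ 2) := by
      refine Summable.add ?_ ?_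
      · exact summable_of_ne_finset_zero (s := K) fun x hx => by
          rw [hψ0 x hx]; ring
      · exact summable_sum fun y _ => ((sbx y).mul_right (2 * ψ y ^ 2))
    refine Summable.of_nonneg_of_le
      (fun x => tsum_nonneg fun y => mul_nonneg (hnonneg x y) (sq_nonneg _))
      (fun x => ?_) hFsum
    have hb : ∀ y, b x y * (ψ x - ψ y) ^ 2 ≤ 2 * ψ x ^ 2 * b x y + b x y * (2 * ψ y ^ 2) := by
      intro y
      have h2 : (ψ x - ψ y) ^ 2 ≤ 2 * ψ x ^ 2 + 2 * ψ y ^ 2 := by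
        nlinarith [sq_nonneg (ψ x + ψ y)]
      have := mul_le_mul_of_nonneg_left h2 (hnonneg x y)
      nlinarith [this]
    have hsum : Summable fun y => 2 * ψ x ^ 2 * b x y + b x y * (2 * ψ y ^ 2) := by
      refine ((hloc x).mul_left _).add ?_
      exact summable_of_ne_finset_zero (s := K) fun y hy => by
        rw [hψ0 y hy]; ring
    calc ∑' y, b x y * (ψ x - ψ y) ^ 2
        ≤ ∑' y, (2 * ψ x ^ 2 * b x y + b x y * (2 * ψ y ^ 2)) :=
          Summable.tsum_le_tsum hb (spsi x) hsum
      _ = 2 * ψ x ^ 2 * d x + ∑ y ∈ K, b x y * (2 * ψ y ^ 2) := by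
          rw [Summable.tsum_add ((hloc x).mul_left (2 * ψ x ^ 2)) (summable_of_ne_finset_zero (s := K)
            (f := fun y => b x y * (2 * ψ y ^ 2)) fun y hy => by simp [hψ0 y hy])]
          rw [tsum_mul_left, tsum_eq_sum (s := K)
            (f := fun y => b x y * (2 * ψ y ^ 2)) (fun y hy => by simp [hψ0 y hy])]
  -- splitting the inner sums
  have hinner : ∀ x, (∑' y, b x y * (ψ x - ψ y) ^ 2) =
      (∑' y, b x y * ((g x * φ x - g y * φ y) * (φ x - φ y))) +
      (∑' y, b x y * (φ x * φ y * (h x - h y) ^ 2)) := by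
    intro x
    rw [← Summable.tsum_add (sPin x) (sQin x)]
    exact tsum_congr fun y => hpt x y
  have SPQ : Summable fun x =>
      (∑' y, b x y * ((g x * φ x - g y * φ y) * (φ x - φ y))) +
      (∑' y, b x y * (φ x * φ y * (h x - h y) ^ 2)) :=
    SA.congr hinner
  have SQout : Summable fun x => ∑' y, b x y * (φ x * φ y * (h x - h y) ^ 2) := by
    refine summable_of_ne_finset_zero (s := K) fun x hx => ?_
    have : ∀ y, b x y * (φ x * φ y * (h x - h y) ^ 2) = 0 := fun y => by
      rw [hφ0 x hx]; ring
    simp [this]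
  have SPout : Summable fun x => ∑' y, b x y * ((g x * φ x - g y * φ y) * (φ x - φ y)) :=
    (SPQ.sub SQout).congr fun x => by ring
  -- the Q part is a finite double sum
  have hQval : (∑' x, ∑' y, b x y * (φ x * φ y * (h x - h y) ^ 2)) =
      ∑ x ∈ K, ∑ y ∈ K, b x y * (φ x * φ y * (h x - h y) ^ 2) := by
    rw [tsum_eq_sum (s := K)
      (f := fun x => ∑' y, b x y * (φ x * φ y * (h x - h y) ^ 2)) (fun x hx => by
      have : ∀ y, b x y * (φ x * φ y * (h x - h y) ^ 2) = 0 := fun y => by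
        rw [hφ0 x hx]; ring
      simp [this])]
    refine Finset.sum_congr rfl fun x _ => ?_
    exact tsum_eq_sum (s := K) (f := fun y => b x y * (φ x * φ y * (h x - h y) ^ 2))
      fun y hy => by simp [hφ0 y hy]
  -- the P part: evaluate inner sum
  have hPin : ∀ x, (∑' y, b x y * ((g x * φ x - g y * φ y) * (φ x - φ y))) =
      g x * φ x * Δ x - φ x * (∑ y ∈ K, b x y * (g y * φ y)) +
      ∑ y ∈ K, b x y * (g y * φ y ^ 2) := by
    intro x
    have s1 : Summable fun y => g x * φ x * (b x y * (φ x - φ y)) := (sΔ x).mul_left _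
    have s2 : Summable fun y => b x y * (g y * φ y) :=
      sKf (fun y => g y * φ y) (fun y hy => by simp [hφ0 y hy]) x
    have s2' : Summable fun y => φ x * (b x y * (g y * φ y)) := s2.mul_left _
    have s3 : Summable fun y => b x y * (g y * φ y ^ 2) :=
      sKf (fun y => g y * φ y ^ 2) (fun y hy => by simp [hφ0 y hy]) x
    have heq : (∑' y, b x y * ((g x * φ x - g y * φ y) * (φ x - φ y))) =
        ∑' y, (g x * φ x * (b x y * (φ x - φ y)) - φ x * (b x y * (g y * φ y)) +
          b x y * (g y * φ y ^ 2)) := tsum_congr fun y => by ring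
    rw [heq, Summable.tsum_add (s1.sub s2') s3, Summable.tsum_sub s1 s2', tsum_mul_left, tsum_mul_left]
    rw [tsum_eq_sum (s := K) (f := fun y => b x y * (g y * φ y))
      (fun y hy => by simp [hφ0 y hy]),
      tsum_eq_sum (s := K) (f := fun y => b x y * (g y * φ y ^ 2))
      (fun y hy => by simp [hφ0 y hy])]
  -- sum the P part over x
  have sGx : ∀ y ∈ K, Summable fun x => b x y * (g y * φ y ^ 2) := by
    intro y _
    exact (sbx y).mul_right _
  have hPval : (∑' x, ∑' y, b x y * ((g x * φ x - g y * φ y) * (φ x - φ y))) =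
      2 * ∑ x ∈ K, g x * φ x * Δ x := by
    have hsplit : (fun x => ∑' y, b x y * ((g x * φ x - g y * φ y) * (φ x - φ y))) =
        fun x => (g x * φ x * Δ x - φ x * (∑ y ∈ K, b x y * (g y * φ y))) +
          ∑ y ∈ K, b x y * (g y * φ y ^ 2) := by
      funext x; rw [hPin x]
    have s12 : Summable fun x =>
        g x * φ x * Δ x - φ x * (∑ y ∈ K, b x y * (g y * φ y)) := by
      refine summable_of_ne_finset_zero (s := K) fun x hx => by rw [hφ0 x hx]; ring
    have s3 : Summable fun x => ∑ y ∈ K, b x y * (g y * φ y ^ 2) :=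
      summable_sum sGx
    rw [hsplit, Summable.tsum_add s12 s3]
    rw [tsum_eq_sum (s := K) (f := fun x =>
      g x * φ x * Δ x - φ x * (∑ y ∈ K, b x y * (g y * φ y)))
      (fun x hx => by simp [hφ0 x hx])]
    rw [Summable.tsum_finsetSum (s := K) sGx]
    have hG : ∀ y ∈ K, (∑' x, b x y * (g y * φ y ^ 2)) = g y * φ y ^ 2 * d y := by
      intro y _
      have h5 : (∑' x, b x y * (g y * φ y ^ 2)) = ∑' x, (g y * φ y ^ 2) * b y x :=
        tsum_congr fun x => by rw [hsymm x y]; ring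
      rw [h5, tsum_mul_left]
    rw [Finset.sum_congr rfl hG]
    -- now a finite-sum identity
    have hswap : ∑ x ∈ K, ∑ y ∈ K, (g x * φ x * (b x y * φ y)) =
        ∑ x ∈ K, ∑ y ∈ K, (φ x * (b x y * (g y * φ y))) := by
      rw [Finset.sum_comm]
      refine Finset.sum_congr rfl fun x _ => Finset.sum_congr rfl fun y _ => ?_
      rw [hsymm y x]; ring
    have hΔexp : ∀ x ∈ K, g x * φ x * Δ x =
        g x * φ x ^ 2 * d x - ∑ y ∈ K, (g x * φ x * (b x y * φ y)) := by
      intro x _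
      have h6 : g x * φ x * (φ x * d x) = g x * φ x ^ 2 * d x := by ring
      rw [hΔeq x, mul_sub, Finset.mul_sum, h6]
    have hexpand : ∑ x ∈ K, (g x * φ x * Δ x - φ x * (∑ y ∈ K, b x y * (g y * φ y))) =
        ∑ x ∈ K, g x * φ x * Δ x - ∑ x ∈ K, ∑ y ∈ K, (φ x * (b x y * (g y * φ y))) := by
      rw [Finset.sum_sub_distrib]
      congr 1
      exact Finset.sum_congr rfl fun x _ => Finset.mul_sum _ _ _
    have hkey : ∑ x ∈ K, g x * φ x * Δ x =
        ∑ y ∈ K, g y * φ y ^ 2 * d y - ∑ x ∈ K, ∑ y ∈ K, (φ x * (b x y * (g y * φ y))) := by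
      rw [Finset.sum_congr rfl hΔexp, Finset.sum_sub_distrib, hswap]
    rw [hexpand]
    linarith [hkey]
  -- total energy identity
  have hA : (∑' x, (1 / 2 : ℝ) * ∑' y, b x y * (ψ x - ψ y) ^ 2) =
      (∑ x ∈ K, g x * φ x * Δ x) +
      (1 / 2) * ∑ x ∈ K, ∑ y ∈ K, b x y * (φ x * φ y * (h x - h y) ^ 2) := by
    rw [tsum_mul_left]
    rw [tsum_congr hinner, Summable.tsum_add SPout SQout, hPval, hQval]
    ring
  -- Hardy inequality applied to ψ
  have hψfin : (Function.support ψ).Finite := by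
    refine hφ.subset fun x hx => ?_
    simp only [Function.mem_support] at hx ⊢
    intro hc
    exact hx (by simp [hψdef, hc])
  have hS : (∑' x, g x * w x * φ x ^ 2) = ∑ x ∈ K, g x * w x * φ x ^ 2 :=
    tsum_eq_sum (s := K) fun x hx => by rw [hφ0 x hx]; ring
  have hHardyψ : (∑ x ∈ K, g x * w x * φ x ^ 2) ≤
      (∑ x ∈ K, g x * φ x * Δ x) +
      (1 / 2) * ∑ x ∈ K, ∑ y ∈ K, b x y * (φ x * φ y * (h x - h y) ^ 2) := by
    have h1 := hHardy ψ hψfin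
    rw [hA] at h1
    have h2 : (∑' x, w x * ψ x ^ 2) = ∑ x ∈ K, g x * w x * φ x ^ 2 := by
      rw [tsum_congr (fun x => by rw [hψsq x]; ring : ∀ x, w x * ψ x ^ 2 = g x * w x * φ x ^ 2)]
      exact hS
    rw [h2] at h1
    exact h1
  -- bound the correction term
  have shdiff : ∀ x, Summable fun y => b x y * (h x - h y) ^ 2 := by
    intro x
    have hsum : Summable fun y => 2 * g x * b x y + 2 * (b x y * g y) :=
      ((hloc x).mul_left _).add ((sbg x).mul_left 2)
    refine Summable.of_nonneg_of_le (fun y => mul_nonneg (hnonneg x y) (sq_nonneg _))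
      (fun y => ?_) hsum
    have h2 : (h x - h y) ^ 2 ≤ 2 * g x + 2 * g y := by
      rw [← hh2 x, ← hh2 y]
      nlinarith [sq_nonneg (h x + h y)]
    have := mul_le_mul_of_nonneg_left h2 (hnonneg x y)
    nlinarith [this]
  have hCbound : (1 / 2 : ℝ) * ∑ x ∈ K, ∑ y ∈ K, b x y * (φ x * φ y * (h x - h y) ^ 2)
      ≤ γ * ∑ x ∈ K, g x * w x * φ x ^ 2 := by
    have step1 : ∑ x ∈ K, ∑ y ∈ K, b x y * (φ x * φ y * (h x - h y) ^ 2) ≤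
        ∑ x ∈ K, ∑ y ∈ K, ((φ x ^ 2 + φ y ^ 2) / 2) * (b x y * (h x - h y) ^ 2) := by
      refine Finset.sum_le_sum fun x _ => Finset.sum_le_sum fun y _ => ?_
      have hbt : (0 : ℝ) ≤ b x y * (h x - h y) ^ 2 :=
        mul_nonneg (hnonneg x y) (sq_nonneg _)
      have h1 : φ x * φ y ≤ (φ x ^ 2 + φ y ^ 2) / 2 := by
        nlinarith [sq_nonneg (φ x - φ y)]
      calc b x y * (φ x * φ y * (h x - h y) ^ 2)
          = (φ x * φ y) * (b x y * (h x - h y) ^ 2) := by ring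
        _ ≤ ((φ x ^ 2 + φ y ^ 2) / 2) * (b x y * (h x - h y) ^ 2) :=
            mul_le_mul_of_nonneg_right h1 hbt
    have step2 : ∑ x ∈ K, ∑ y ∈ K, ((φ x ^ 2 + φ y ^ 2) / 2) * (b x y * (h x - h y) ^ 2) =
        ∑ x ∈ K, ∑ y ∈ K, φ x ^ 2 * (b x y * (h x - h y) ^ 2) := by
      have hsplit : ∀ x ∈ K, ∀ y ∈ K,
          ((φ x ^ 2 + φ y ^ 2) / 2) * (b x y * (h x - h y) ^ 2) =
          (1 / 2) * (φ x ^ 2 * (b x y * (h x - h y) ^ 2)) +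
          (1 / 2) * (φ y ^ 2 * (b x y * (h x - h y) ^ 2)) := by
        intro x _ y _; ring
      have hsym2 : ∑ x ∈ K, ∑ y ∈ K, φ y ^ 2 * (b x y * (h x - h y) ^ 2) =
          ∑ x ∈ K, ∑ y ∈ K, φ x ^ 2 * (b x y * (h x - h y) ^ 2) := by
        rw [Finset.sum_comm]
        refine Finset.sum_congr rfl fun x _ => Finset.sum_congr rfl fun y _ => ?_
        rw [hsymm y x]; ring
      calc ∑ x ∈ K, ∑ y ∈ K, ((φ x ^ 2 + φ y ^ 2) / 2) * (b x y * (h x - h y) ^ 2)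
          = ∑ x ∈ K, ∑ y ∈ K, ((1 / 2) * (φ x ^ 2 * (b x y * (h x - h y) ^ 2)) +
            (1 / 2) * (φ y ^ 2 * (b x y * (h x - h y) ^ 2))) := by
            refine Finset.sum_congr rfl fun x hx => Finset.sum_congr rfl fun y hy => hsplit x hx y hy
        _ = (1 / 2) * (∑ x ∈ K, ∑ y ∈ K, φ x ^ 2 * (b x y * (h x - h y) ^ 2)) +
            (1 / 2) * (∑ x ∈ K, ∑ y ∈ K, φ y ^ 2 * (b x y * (h x - h y) ^ 2)) := by
            simp [Finset.sum_add_distrib, Finset.mul_sum]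
        _ = ∑ x ∈ K, ∑ y ∈ K, φ x ^ 2 * (b x y * (h x - h y) ^ 2) := by
            rw [hsym2]; ring
    have step3 : ∑ x ∈ K, ∑ y ∈ K, φ x ^ 2 * (b x y * (h x - h y) ^ 2) ≤
        ∑ x ∈ K, φ x ^ 2 * (2 * (γ * g x * w x)) := by
      refine Finset.sum_le_sum fun x _ => ?_
      have hsum_le : ∑ y ∈ K, b x y * (h x - h y) ^ 2 ≤ ∑' y, b x y * (h x - h y) ^ 2 :=
        Summable.sum_le_tsum K (fun y _ => mul_nonneg (hnonneg x y) (sq_nonneg _)) (shdiff x)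
      have heik' : (∑' y, b x y * (h x - h y) ^ 2) ≤ 2 * (γ * g x * w x) := by
        have := heik x
        simp only [hhdef] at this ⊢
        linarith
      have : ∑ y ∈ K, b x y * (h x - h y) ^ 2 ≤ 2 * (γ * g x * w x) :=
        le_trans hsum_le heik'
      calc ∑ y ∈ K, φ x ^ 2 * (b x y * (h x - h y) ^ 2)
          = φ x ^ 2 * ∑ y ∈ K, b x y * (h x - h y) ^ 2 := by rw [Finset.mul_sum]
        _ ≤ φ x ^ 2 * (2 * (γ * g x * w x)) :=
            mul_le_mul_of_nonneg_left this (sq_nonneg _)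
    have : ∑ x ∈ K, φ x ^ 2 * (2 * (γ * g x * w x)) =
        2 * (γ * ∑ x ∈ K, g x * w x * φ x ^ 2) := by
      rw [Finset.mul_sum, Finset.mul_sum]
      exact Finset.sum_congr rfl fun x _ => by ring
    linarith [le_trans (le_trans step1 (le_of_eq step2)) step3]
  -- lower bound on B
  have hB : (1 - γ) * (∑ x ∈ K, g x * w x * φ x ^ 2) ≤ ∑ x ∈ K, g x * φ x * Δ x := by
    linarith [hHardyψ, hCbound]
  -- Cauchy-Schwarz
  have hCS : (∑ x ∈ K, g x * φ x * Δ x) ^ 2 ≤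
      (∑ x ∈ K, g x / w x * Δ x ^ 2) * (∑ x ∈ K, g x * w x * φ x ^ 2) := by
    have key := Finset.sum_mul_sq_le_sq_mul_sq K
      (fun x => Real.sqrt (g x / w x) * Δ x) (fun x => Real.sqrt (g x * w x) * φ x)
    have h1 : ∀ x, (Real.sqrt (g x / w x) * Δ x) * (Real.sqrt (g x * w x) * φ x) =
        g x * φ x * Δ x := by
      intro x
      have : Real.sqrt (g x / w x) * Real.sqrt (g x * w x) = g x := by
        rw [← Real.sqrt_mul (div_nonneg (hg x).le (hw x).le)]
        have hwx : w x ≠ 0 := (hw x).ne'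
        have : g x / w x * (g x * w x) = g x ^ 2 := by
          field_simp
        rw [this, Real.sqrt_sq (hg x).le]
      calc (Real.sqrt (g x / w x) * Δ x) * (Real.sqrt (g x * w x) * φ x)
          = (Real.sqrt (g x / w x) * Real.sqrt (g x * w x)) * (Δ x * φ x) := by ring
        _ = g x * φ x * Δ x := by rw [this]; ring
    have h2 : ∀ x, (Real.sqrt (g x / w x) * Δ x) ^ 2 = g x / w x * Δ x ^ 2 := by
      intro x
      rw [mul_pow, Real.sq_sqrt (div_nonneg (hg x).le (hw x).le)]
    have h3 : ∀ x, (Real.sqrt (g x * w x) * φ x) ^ 2 = g x * w x * φ x ^ 2 := by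
      intro x
      rw [mul_pow, Real.sq_sqrt (mul_nonneg (hg x).le (hw x).le)]
    rw [Finset.sum_congr rfl fun x _ => h1 x, Finset.sum_congr rfl fun x _ => h2 x,
      Finset.sum_congr rfl fun x _ => h3 x] at key
    exact key
  -- rewrite the goal
  have hT : (∑' x, if φ x = 0 then 0 else (g x / w x) * (∑' y, b x y * (φ x - φ y)) ^ 2)
      = ∑ x ∈ K, g x / w x * Δ x ^ 2 := by
    rw [tsum_eq_sum (s := K) (fun x hx => by simp [hφ0 x hx])]
    refine Finset.sum_congr rfl fun x hx => ?_
    rw [if_neg ((hKmem x).1 hx)]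
  rw [ge_iff_le, hT, hS]
  set S : ℝ := ∑ x ∈ K, g x * w x * φ x ^ 2 with hSdef
  set T : ℝ := ∑ x ∈ K, g x / w x * Δ x ^ 2 with hTdef
  have hS0 : 0 ≤ S := Finset.sum_nonneg fun x _ =>
    mul_nonneg (mul_nonneg (hg x).le (hw x).le) (sq_nonneg _)
  have hT0 : 0 ≤ T := Finset.sum_nonneg fun x _ =>
    mul_nonneg (div_nonneg (hg x).le (hw x).le) (sq_nonneg _)
  rcases eq_or_lt_of_le hS0 with hS0' | hSpos
  · rw [← hS0', Real.sqrt_zero, mul_zero]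
    exact Real.sqrt_nonneg _
  · have hγ' : (0 : ℝ) ≤ 1 - γ := by linarith
    have hBS : (0 : ℝ) ≤ (1 - γ) * S := mul_nonneg hγ' hS0
    have hsq : ((1 - γ) * S) ^ 2 ≤ ((∑ x ∈ K, g x * φ x * Δ x)) ^ 2 :=
      pow_le_pow_left₀ hBS hB 2
    have hTS : (1 - γ) ^ 2 * S * S ≤ T * S := by
      calc (1 - γ) ^ 2 * S * S = ((1 - γ) * S) ^ 2 := by ring
        _ ≤ ((∑ x ∈ K, g x * φ x * Δ x)) ^ 2 := hsq
        _ ≤ T * S := hCS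
    have hfinal : (1 - γ) ^ 2 * S ≤ T := le_of_mul_le_mul_right hTS hSpos
    calc (1 - γ) * Real.sqrt S = Real.sqrt ((1 - γ) ^ 2 * S) := by
          rw [Real.sqrt_mul (sq_nonneg _), Real.sqrt_sq hγ']
      _ ≤ Real.sqrt T := Real.sqrt_le_sqrt hfinal
end

section
/- Suppose w: X → (0,∞) is a Hardy weight with w ∈ F(X), and there exists 0 < γ < 1 such that |∇(w^{1/2})|² ≤ γ w² pointwise on X. Then for all φ ∈ C_c(X): (∑_{x ∈ supp φ} (Δφ(x))²)^{1/2} ≥ (1−γ) (∑_X w² φ²)^{1/2}. -/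
/-!
With `u = √w`, the ground state identity
`(u φ (x) - u φ (y))² = (φ x - φ y) (w φ (x) - w φ (y)) + φ x φ y (u x - u y)²`
splits the energy of `u φ` in two parts. Green's formula turns the first into `⟨w φ, Δφ⟩`, and
`φ x φ y ≤ (φ x² + φ y²) / 2` bounds the second by `∑ φ² |∇u|² ≤ γ ‖w φ‖²`. The Hardy inequality
for `u φ` thus gives `(1 - γ) ‖w φ‖² ≤ ⟨w φ, Δφ⟩ ≤ ‖w φ‖ ‖Δφ‖`.
-/

open Real Finset

namespace WeightedGraph

variable {X : Type*} {b : X → X → ℝ} {S : Finset X} {φ f u : X → ℝ} {x y : X}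

noncomputable def laplacian (b : X → X → ℝ) (φ : X → ℝ) (x : X) : ℝ := ∑' y, b x y * (φ x - φ y)

noncomputable def gradSq (b : X → X → ℝ) (φ : X → ℝ) (x : X) : ℝ :=
  (1 / 2) * ∑' y, b x y * (φ x - φ y) ^ 2

theorem summable_mul_sub (hb : Summable (b x)) (hφ : ∀ y ∉ S, φ y = 0) :
    Summable fun y => b x y * (φ x - φ y) :=
  ((hb.mul_right (φ x)).sub (summable_of_ne_finset_zero (f := fun y => b x y * φ y) (s := S)
    fun y hy => by simp [hφ y hy])).congr fun y => by ring

theorem hasSum_mul_sub_left (hsymm : ∀ x y, b x y = b y x) (hb : Summable (b y))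
    (hφ : ∀ x ∉ S, φ x = 0) :
    HasSum (fun x => b x y * (φ x - φ y)) (-laplacian b φ y) :=
  (summable_mul_sub hb hφ).hasSum.neg.congr_fun fun x => by rw [hsymm]; ring

theorem hasSum_mul_sub_mul_sub (hb : Summable (b x)) (hφ : ∀ y ∉ S, φ y = 0)
    (hf : ∀ y ∉ S, f y = 0) :
    HasSum (fun y => b x y * (φ x - φ y) * (f x - f y))
      (f x * laplacian b φ x - ∑ y ∈ S, b x y * (φ x - φ y) * f y) :=
  (((summable_mul_sub hb hφ).hasSum.mul_left (f x)).sub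
    (hasSum_sum_of_ne_finset_zero fun y hy => by simp [hf y hy])).congr_fun fun y => by ring

/-- Green's formula. -/
theorem hasSum_tsum_mul_sub_mul_sub (hsymm : ∀ x y, b x y = b y x) (hloc : ∀ x, Summable (b x))
    (hφ : ∀ x ∉ S, φ x = 0) (hf : ∀ x ∉ S, f x = 0) :
    HasSum (fun x => ∑' y, b x y * (φ x - φ y) * (f x - f y))
      (2 * ∑ x ∈ S, f x * laplacian b φ x) := by
  have hdiag : HasSum (fun x => f x * laplacian b φ x) (∑ x ∈ S, f x * laplacian b φ x) :=
    hasSum_sum_of_ne_finset_zero fun x hx => by simp [hf x hx]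
  have hoff : HasSum (fun x => ∑ y ∈ S, b x y * (φ x - φ y) * f y)
      (-∑ y ∈ S, f y * laplacian b φ y) := by
    rw [← sum_neg_distrib]
    refine hasSum_sum fun y _ => ?_
    rw [show -(f y * laplacian b φ y) = -laplacian b φ y * f y by ring]
    exact (hasSum_mul_sub_left hsymm (hloc y) hφ).mul_right (f y)
  rw [funext fun x => (hasSum_mul_sub_mul_sub (hloc x) hφ hf).tsum_eq, two_mul,
    ← sub_neg_eq_add]
  exact hdiag.sub hoff

theorem hasSum_gradSq_mul (hsymm : ∀ x y, b x y = b y x) (hloc : ∀ x, Summable (b x))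
    (hφ : ∀ x ∉ S, φ x = 0) (u : X → ℝ) :
    HasSum (fun x => gradSq b (fun x => u x * φ x) x)
      (∑ x ∈ S, u x ^ 2 * φ x * laplacian b φ x
        + (1 / 2) * ∑ x ∈ S, ∑ y ∈ S, b x y * (φ x * φ y) * (u x - u y) ^ 2) := by
  have hf : ∀ x ∉ S, u x ^ 2 * φ x = 0 := fun x hx => by simp [hφ x hx]
  have hcross : ∀ x, ∀ y ∉ S, b x y * (φ x * φ y) * (u x - u y) ^ 2 = 0 :=
    fun x y hy => by simp [hφ y hy]
  have hrow : ∀ x, gradSq b (fun x => u x * φ x) x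
      = (1 / 2) * ∑' y, b x y * (φ x - φ y) * (u x ^ 2 * φ x - u y ^ 2 * φ y)
        + (1 / 2) * ∑ y ∈ S, b x y * (φ x * φ y) * (u x - u y) ^ 2 := by
    intro x
    rw [gradSq, ← tsum_eq_sum (L := .unconditional X) (hcross x), ← mul_add,
      ← (hasSum_mul_sub_mul_sub (hloc x) hφ hf).summable.tsum_add
        (summable_of_ne_finset_zero (hcross x))]
    exact congrArg _ (tsum_congr fun y => by ring)
  have hcrossSum : HasSum (fun x => ∑ y ∈ S, b x y * (φ x * φ y) * (u x - u y) ^ 2)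
      (∑ x ∈ S, ∑ y ∈ S, b x y * (φ x * φ y) * (u x - u y) ^ 2) :=
    hasSum_sum_of_ne_finset_zero fun x hx => by simp [hφ x hx]
  have hgreen := hasSum_tsum_mul_sub_mul_sub (f := fun x => u x ^ 2 * φ x) hsymm hloc hφ hf
  rw [show ∀ a c : ℝ, a + 1 / 2 * c = 1 / 2 * (2 * a) + 1 / 2 * c from fun a c => by ring]
  exact ((hgreen.mul_left (1 / 2)).add (hcrossSum.mul_left (1 / 2))).congr_fun hrow

theorem sum_sum_mul_mul_le_sum_sq_mul_sum {ι : Type*} (s : Finset ι) {k : ι → ι → ℝ}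
    (hk : ∀ i j, k i j = k j i) (hk0 : ∀ i j, 0 ≤ k i j) (φ : ι → ℝ) :
    ∑ i ∈ s, ∑ j ∈ s, k i j * (φ i * φ j) ≤ ∑ i ∈ s, φ i ^ 2 * ∑ j ∈ s, k i j := by
  have hswap : ∑ i ∈ s, ∑ j ∈ s, k i j * φ j ^ 2 = ∑ i ∈ s, ∑ j ∈ s, k i j * φ i ^ 2 := by
    rw [sum_comm]
    exact sum_congr rfl fun i _ => sum_congr rfl fun j _ => by rw [hk]
  calc ∑ i ∈ s, ∑ j ∈ s, k i j * (φ i * φ j)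
      ≤ ∑ i ∈ s, ∑ j ∈ s, (k i j * φ i ^ 2 + k i j * φ j ^ 2) / 2 := by
        gcongr with i _ j _
        nlinarith [mul_nonneg (hk0 i j) (sq_nonneg (φ i - φ j))]
    _ = (∑ i ∈ s, ∑ j ∈ s, k i j * φ i ^ 2 + ∑ i ∈ s, ∑ j ∈ s, k i j * φ j ^ 2) / 2 := by
        simp only [← sum_add_distrib, sum_div]
    _ = ∑ i ∈ s, φ i ^ 2 * ∑ j ∈ s, k i j := by
        rw [hswap, add_self_div_two]
        exact sum_congr rfl fun i _ => by rw [mul_sum]; exact sum_congr rfl fun j _ => by ring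

theorem summable_mul_sq_sub (hnonneg : ∀ y, 0 ≤ b x y) (hb : Summable (b x))
    (hu : Summable fun y => b x y * u y ^ 2) :
    Summable fun y => b x y * (u x - u y) ^ 2 := by
  refine Summable.of_nonneg_of_le (fun y => mul_nonneg (hnonneg y) (sq_nonneg _)) (fun y => ?_)
    ((hb.mul_left (2 * u x ^ 2)).add (hu.mul_left 2))
  have := mul_le_mul_of_nonneg_left
    (show (u x - u y) ^ 2 ≤ 2 * u x ^ 2 + 2 * u y ^ 2 by nlinarith [sq_nonneg (u x + u y)])
    (hnonneg y)
  linarith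

theorem half_sum_sum_le_sum_sq_mul_gradSq (hsymm : ∀ x y, b x y = b y x)
    (hnonneg : ∀ x y, 0 ≤ b x y) (hsumm : ∀ x, Summable fun y => b x y * (u x - u y) ^ 2)
    (S : Finset X) (φ : X → ℝ) :
    (1 / 2) * ∑ x ∈ S, ∑ y ∈ S, b x y * (φ x * φ y) * (u x - u y) ^ 2
      ≤ ∑ x ∈ S, φ x ^ 2 * gradSq b u x := by
  let k x y := b x y * (u x - u y) ^ 2
  have hk : ∀ x y, k x y = k y x := fun x y => by simp only [k]; rw [hsymm]; ring
  have hk0 : ∀ x y, 0 ≤ k x y := fun x y => mul_nonneg (hnonneg x y) (sq_nonneg _)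
  calc (1 / 2) * ∑ x ∈ S, ∑ y ∈ S, b x y * (φ x * φ y) * (u x - u y) ^ 2
      = (1 / 2) * ∑ x ∈ S, ∑ y ∈ S, k x y * (φ x * φ y) := by
        simp only [k, mul_right_comm]
    _ ≤ (1 / 2) * ∑ x ∈ S, φ x ^ 2 * ∑ y ∈ S, k x y :=
        mul_le_mul_of_nonneg_left (sum_sum_mul_mul_le_sum_sq_mul_sum S hk hk0 φ) (by norm_num)
    _ ≤ (1 / 2) * ∑ x ∈ S, φ x ^ 2 * ∑' y, k x y := by
        gcongr with x _
        exact (hsumm x).sum_le_tsum S fun y _ => hk0 x y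
    _ = ∑ x ∈ S, φ x ^ 2 * gradSq b u x := by
        rw [mul_sum]
        exact sum_congr rfl fun x _ => by rw [gradSq]; ring

end WeightedGraph

theorem mul_sqrt_le_sqrt_of_mul_le_sqrt_mul_sqrt {a c d : ℝ} (ha : 0 ≤ a)
    (h : c * a ≤ √a * √d) : c * √a ≤ √d := by
  rcases ha.eq_or_lt with rfl | ha
  · simp [sqrt_nonneg]
  refine le_of_mul_le_mul_left ?_ (sqrt_pos.2 ha)
  rwa [mul_left_comm, mul_self_sqrt ha.le]

open WeightedGraph in
theorem stmt2_general
    (X : Type*)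
    (b : X → X → ℝ)
    (hsymm : ∀ x y, b x y = b y x)
    (hnonneg : ∀ x y, 0 ≤ b x y)
    (hloc : ∀ x, Summable (fun y => b x y))
    (w : X → ℝ) (hw : ∀ x, 0 < w x)
    (hwF : ∀ x, Summable (fun y => b x y * |w y|))
    (hHardy : ∀ ψ : X → ℝ, (Function.support ψ).Finite →
      (∑' x, (1 / 2) * ∑' y, b x y * (ψ x - ψ y) ^ 2) ≥ ∑' x, w x * ψ x ^ 2)
    (γ : ℝ)
    (heik : ∀ x, (1 / 2) * ∑' y, b x y * (Real.sqrt (w x) - Real.sqrt (w y)) ^ 2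
      ≤ γ * (w x) ^ 2)
    (φ : X → ℝ) (hφ : (Function.support φ).Finite) :
    Real.sqrt (∑' x, if φ x = 0 then 0 else (∑' y, b x y * (φ x - φ y)) ^ 2)
      ≥ (1 - γ) * Real.sqrt (∑' x, (w x) ^ 2 * φ x ^ 2) := by
  classical
  set S := hφ.toFinset
  have hS : ∀ x ∉ S, φ x = 0 := fun x hx => by simpa [S] using hx
  set u : X → ℝ := fun x => √(w x)
  have hu : ∀ x, u x ^ 2 = w x := fun x => sq_sqrt (hw x).le
  have hsumm : ∀ x, Summable fun y => b x y * (u x - u y) ^ 2 := fun x =>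
    summable_mul_sq_sub (hnonneg x) (hloc x)
      ((hwF x).congr fun y => by rw [hu, abs_of_pos (hw y)])
  have hnorm : ∑' x, w x ^ 2 * φ x ^ 2 = ∑ x ∈ S, (w x * φ x) ^ 2 :=
    (tsum_eq_sum fun x hx => by simp [hS x hx]).trans (sum_congr rfl fun x _ => by ring)
  have hlap : ∑' x, (if φ x = 0 then 0 else (∑' y, b x y * (φ x - φ y)) ^ 2)
      = ∑ x ∈ S, laplacian b φ x ^ 2 :=
    (tsum_eq_sum fun x hx => if_pos (hS x hx)).trans
      (sum_congr rfl fun x hx => if_neg (by simpa [S] using hx))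
  set E := (1 / 2) * ∑ x ∈ S, ∑ y ∈ S, b x y * (φ x * φ y) * (u x - u y) ^ 2
  have henergy : ∑ x ∈ S, (w x * φ x) ^ 2 ≤ ∑ x ∈ S, w x * φ x * laplacian b φ x + E :=
    calc ∑ x ∈ S, (w x * φ x) ^ 2 = ∑' x, w x * (u x * φ x) ^ 2 := by
          rw [← hnorm]; exact tsum_congr fun x => by rw [mul_pow, hu]; ring
      _ ≤ ∑' x, gradSq b (fun x => u x * φ x) x :=
          hHardy _ (hφ.subset (Function.support_mul_subset_right _ _))
      _ = ∑ x ∈ S, w x * φ x * laplacian b φ x + E := by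
          rw [(hasSum_gradSq_mul hsymm hloc hS u).tsum_eq]; simp only [hu]; rfl
  have hE : E ≤ γ * ∑ x ∈ S, (w x * φ x) ^ 2 := by
    refine (half_sum_sum_le_sum_sq_mul_gradSq hsymm hnonneg hsumm S φ).trans ?_
    rw [mul_sum]
    refine sum_le_sum fun x _ => ?_
    have hx : gradSq b u x ≤ γ * w x ^ 2 := heik x
    exact (mul_le_mul_of_nonneg_left hx (sq_nonneg (φ x))).trans_eq (by ring)
  have hCS : ∑ x ∈ S, w x * φ x * laplacian b φ x
      ≤ √(∑ x ∈ S, (w x * φ x) ^ 2) * √(∑ x ∈ S, laplacian b φ x ^ 2) :=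
    Real.sum_mul_le_sqrt_mul_sqrt _ _ _
  rw [hnorm, hlap]
  exact mul_sqrt_le_sqrt_of_mul_le_sqrt_mul_sqrt (sum_nonneg fun x _ => sq_nonneg _)
    (by linarith)

theorem stmt2
    (X : Type*) [Countable X]
    (b : X → X → ℝ)
    (hsymm : ∀ x y, b x y = b y x)
    (hdiag : ∀ x, b x x = 0)
    (hnonneg : ∀ x y, 0 ≤ b x y)
    (hloc : ∀ x, Summable (fun y => b x y))
    (w : X → ℝ) (hw : ∀ x, 0 < w x)
    (hwF : ∀ x, Summable (fun y => b x y * |w y|))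
    (hHardy : ∀ ψ : X → ℝ, (Function.support ψ).Finite →
      (∑' x, (1 / 2) * ∑' y, b x y * (ψ x - ψ y) ^ 2) ≥ ∑' x, w x * ψ x ^ 2)
    (γ : ℝ) (hγ0 : 0 < γ) (hγ1 : γ < 1)
    (heik : ∀ x, (1 / 2) * ∑' y, b x y * (Real.sqrt (w x) - Real.sqrt (w y)) ^ 2
      ≤ γ * (w x) ^ 2)
    (φ : X → ℝ) (hφ : (Function.support φ).Finite) :
    Real.sqrt (∑' x, if φ x = 0 then 0 else (∑' y, b x y * (φ x - φ y)) ^ 2)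
      ≥ (1 - γ) * Real.sqrt (∑' x, (w x) ^ 2 * φ x ^ 2) :=
  stmt2_general X b hsymm hnonneg hloc w hw hwF hHardy γ heik φ hφ
end

section
/- Let w be a Hardy weight on Y ⊆ X, g ∈ F(Y) strictly positive, and 0 < γ < 1 such that (1/2)∑_{y∈Y} b(x,y)(g^{1/2}(x)−g^{1/2}(y))² ≤ γ g(x) w(x) for all x ∈ Y. Then for all φ ∈ C_c(Y): (∑_{x ∈ supp φ} (g/w)(x)(Δφ(x))²)^{1/2} ≥ (1−γ)(∑_Y g w φ²)^{1/2}. -/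
open Real Classical

theorem stmt4
    (X : Type*) [Countable X]
    (b : X → X → ℝ)
    (hsymm : ∀ x y, b x y = b y x)
    (hdiag : ∀ x, b x x = 0)
    (hnonneg : ∀ x y, 0 ≤ b x y)
    (hloc : ∀ x, Summable (fun y => b x y))
    (Y : Set X)
    (w : X → ℝ) (hw : ∀ x ∈ Y, 0 < w x)
    (hHardy : ∀ ψ : X → ℝ, (Function.support ψ).Finite →
      Function.support ψ ⊆ Y →
      (∑' x, (1 / 2) * ∑' y, b x y * (ψ x - ψ y) ^ 2)
        ≥ ∑' x, if x ∈ Y then w x * ψ x ^ 2 else 0)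
    (g : X → ℝ) (hg : ∀ x ∈ Y, 0 < g x)
    (hgF : ∀ x ∈ Y, Summable (fun y => b x y * |g y|))
    (γ : ℝ) (hγ0 : 0 < γ) (hγ1 : γ < 1)
    (heik : ∀ x ∈ Y,
      (1 / 2) * (∑' y, if y ∈ Y then
          b x y * (Real.sqrt (g x) - Real.sqrt (g y)) ^ 2 else 0)
        ≤ γ * g x * w x)
    (φ : X → ℝ) (hφ : (Function.support φ).Finite)
    (hφY : Function.support φ ⊆ Y) :
    Real.sqrt (∑' x, if φ x = 0 then 0 else
        (g x / w x) * (∑' y, b x y * (φ x - φ y)) ^ 2)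
      ≥ (1 - γ) * Real.sqrt (∑' x, if x ∈ Y then g x * w x * φ x ^ 2 else 0) := by
  classical
  set f : X → ℝ := fun x => Real.sqrt (g x) with hfdef
  set ψ : X → ℝ := fun x => f x * φ x with hψdef
  have hψsupp : Function.support ψ ⊆ Function.support φ := by
    intro x hx
    simp only [Function.mem_support] at hx ⊢
    intro h
    exact hx (by simp [hψdef, h])
  set K : Finset X := hφ.toFinset with hKdef
  have hmemK : ∀ x, x ∈ K ↔ φ x ≠ 0 := by
    intro x
    simp [hKdef, Set.Finite.mem_toFinset, Function.mem_support]
  have hKY : ∀ x ∈ K, x ∈ Y := fun x hx => hφY ((hmemK x).1 hx)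
  have hφ0 : ∀ x ∉ K, φ x = 0 := by
    intro x hx
    by_contra h
    exact hx ((hmemK x).2 h)
  have hψ0 : ∀ x ∉ K, ψ x = 0 := fun x hx => by simp [hψdef, hφ0 x hx]
  have hfsq : ∀ x ∈ Y, f x ^ 2 = g x := fun x hx => Real.sq_sqrt (hg x hx).le
  have hψsq : ∀ x ∈ K, ψ x ^ 2 = g x * φ x ^ 2 := by
    intro x hx
    simp only [hψdef, mul_pow]
    rw [hfsq x (hKY x hx)]
  have hcol : ∀ y, Summable (fun x => b x y) := fun y =>
    (hloc y).congr (fun x => hsymm y x)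
  set B : X → ℝ := fun x => ∑' y, b x y with hBdef
  set C : X → ℝ := fun x => ∑ y ∈ K, b x y * ψ y with hCdef
  set Cφ : X → ℝ := fun x => ∑ y ∈ K, b x y * φ y with hCφdef
  set Δ : X → ℝ := fun x => φ x * B x - Cφ x with hΔdef
  -- inner sum identity for ψ
  have hinnerψ : ∀ x, (∑' y, b x y * (ψ x - ψ y) ^ 2)
      = ψ x ^ 2 * B x - 2 * ψ x * C x + ∑ y ∈ K, b x y * ψ y ^ 2 := by
    intro x
    have s1 : Summable (fun y => ψ x ^ 2 * b x y) := (hloc x).mul_left _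
    have s2 : Summable (fun y => 2 * ψ x * (b x y * ψ y)) :=
      summable_of_ne_finset_zero (s := K) (fun y hy => by simp [hψ0 y hy])
    have s3 : Summable (fun y => b x y * ψ y ^ 2) :=
      summable_of_ne_finset_zero (s := K) (fun y hy => by simp [hψ0 y hy])
    have hexp : ∀ y, b x y * (ψ x - ψ y) ^ 2
        = (ψ x ^ 2 * b x y - 2 * ψ x * (b x y * ψ y)) + b x y * ψ y ^ 2 := by
      intro y; ring
    rw [tsum_congr hexp, Summable.tsum_add (s1.sub s2) s3, Summable.tsum_sub s1 s2, tsum_mul_left,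
      tsum_mul_left, tsum_eq_sum (f := fun y => b x y * ψ y)
        (s := K) (fun y hy => by simp [hψ0 y hy]),
      tsum_eq_sum (f := fun y => b x y * ψ y ^ 2)
        (s := K) (fun y hy => by simp [hψ0 y hy])]
  -- inner sum identity for φ (the Laplacian)
  have hΔeq : ∀ x, (∑' y, b x y * (φ x - φ y)) = Δ x := by
    intro x
    have s1 : Summable (fun y => φ x * b x y) := (hloc x).mul_left _
    have s2 : Summable (fun y => b x y * φ y) :=
      summable_of_ne_finset_zero (s := K) (fun y hy => by simp [hφ0 y hy])
    have hexp : ∀ y, b x y * (φ x - φ y) = φ x * b x y - b x y * φ y := by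
      intro y; ring
    rw [tsum_congr hexp, Summable.tsum_sub s1 s2, tsum_mul_left,
      tsum_eq_sum (f := fun y => b x y * φ y) (s := K) (fun y hy => by simp [hφ0 y hy])]
  -- the energy of ψ as a finite sum
  have hQ : (∑' x, (1 / 2) * ∑' y, b x y * (ψ x - ψ y) ^ 2)
      = (∑ x ∈ K, ψ x ^ 2 * B x) - ∑ x ∈ K, ψ x * C x := by
    have su3 : Summable (fun x => ∑ y ∈ K, b x y * ψ y ^ 2) :=
      summable_sum (fun y _ => (hcol y).mul_right _)
    have su1 : Summable (fun x => ψ x ^ 2 * B x - 2 * ψ x * C x) :=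
      summable_of_ne_finset_zero (s := K) (fun x hx => by simp [hψ0 x hx])
    calc (∑' x, (1 / 2) * ∑' y, b x y * (ψ x - ψ y) ^ 2)
        = ∑' x, (1 / 2) * ((ψ x ^ 2 * B x - 2 * ψ x * C x)
            + ∑ y ∈ K, b x y * ψ y ^ 2) := by
          refine tsum_congr fun x => ?_
          rw [hinnerψ x]
      _ = (1 / 2) * ((∑' x, (ψ x ^ 2 * B x - 2 * ψ x * C x))
            + ∑' x, ∑ y ∈ K, b x y * ψ y ^ 2) := by
          rw [tsum_mul_left, Summable.tsum_add su1 su3]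
      _ = (1 / 2) * ((∑ x ∈ K, (ψ x ^ 2 * B x - 2 * ψ x * C x))
            + ∑ y ∈ K, ψ y ^ 2 * B y) := by
          rw [tsum_eq_sum (s := K) (fun x hx => by simp [hψ0 x hx]),
            Summable.tsum_finsetSum (fun y _ => (hcol y).mul_right _)]
          congr 1
          congr 1
          refine Finset.sum_congr rfl fun y _ => ?_
          rw [tsum_mul_right, tsum_congr (fun x => hsymm x y)]
          simp only [hBdef]
          ring
      _ = (∑ x ∈ K, ψ x ^ 2 * B x) - ∑ x ∈ K, ψ x * C x := by
          rw [Finset.sum_sub_distrib]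
          have h2 : ∑ x ∈ K, 2 * ψ x * C x = 2 * ∑ x ∈ K, ψ x * C x := by
            rw [Finset.mul_sum]
            exact Finset.sum_congr rfl fun x _ => by ring
          rw [h2]
          ring
  -- the finite form of S
  set S : ℝ := ∑ x ∈ K, g x * w x * φ x ^ 2 with hSdef
  have hStsum : (∑' x, if x ∈ Y then g x * w x * φ x ^ 2 else 0) = S := by
    rw [tsum_eq_sum (s := K) (fun x hx => by simp [hφ0 x hx])]
    exact Finset.sum_congr rfl fun x hx => by rw [if_pos (hKY x hx)]
  have hS0 : 0 ≤ S := Finset.sum_nonneg fun x hx =>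
    mul_nonneg (mul_nonneg (hg x (hKY x hx)).le (hw x (hKY x hx)).le) (sq_nonneg _)
  -- Hardy applied to ψ
  have hHψ : S ≤ (∑ x ∈ K, ψ x ^ 2 * B x) - ∑ x ∈ K, ψ x * C x := by
    have h := hHardy ψ (hφ.subset hψsupp) (fun x hx => hφY (hψsupp hx))
    rw [hQ] at h
    have e : (∑' x, if x ∈ Y then w x * ψ x ^ 2 else 0) = S := by
      rw [tsum_eq_sum (s := K) (fun x hx => by simp [hψ0 x hx])]
      refine Finset.sum_congr rfl fun x hx => ?_
      rw [if_pos (hKY x hx), hψsq x hx]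
      ring
    rw [e] at h
    exact h
  -- key pointwise identity
  set R : ℝ := ∑ x ∈ K, ∑ y ∈ K, b x y * (φ x * φ y) * (g x - f x * f y) with hRdef
  set T : ℝ := ∑ x ∈ K, g x * φ x * Δ x with hTdef
  have key : ∀ x ∈ K, ψ x ^ 2 * B x - ψ x * C x
      = g x * φ x * Δ x + ∑ y ∈ K, b x y * (φ x * φ y) * (g x - f x * f y) := by
    intro x hx
    have e1 : ψ x * C x = ∑ y ∈ K, (f x * φ x) * (b x y * (f y * φ y)) := by
      simp only [hCdef, hψdef, Finset.mul_sum]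
    have e2 : ∑ y ∈ K, b x y * (φ x * φ y) * (g x - f x * f y)
        = (∑ y ∈ K, g x * φ x * (b x y * φ y))
          - ∑ y ∈ K, (f x * φ x) * (b x y * (f y * φ y)) := by
      rw [← Finset.sum_sub_distrib]
      exact Finset.sum_congr rfl fun y _ => by ring
    have e3 : g x * φ x * Δ x
        = g x * φ x * (φ x * B x) - ∑ y ∈ K, g x * φ x * (b x y * φ y) := by
      simp only [hΔdef, hCφdef, Finset.mul_sum, mul_sub]
    rw [hψsq x hx, e1, e2, e3]
    ring
  have hQTR : (∑ x ∈ K, ψ x ^ 2 * B x) - ∑ x ∈ K, ψ x * C x = T + R := by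
    rw [hTdef, hRdef, ← Finset.sum_add_distrib, ← Finset.sum_sub_distrib]
    exact Finset.sum_congr rfl fun x hx => key x hx
  -- symmetrization of R
  have hswap : R = ∑ x ∈ K, ∑ y ∈ K, b x y * (φ x * φ y) * (g y - f x * f y) := by
    rw [hRdef, Finset.sum_comm]
    refine Finset.sum_congr rfl fun x _ => Finset.sum_congr rfl fun y _ => ?_
    rw [hsymm y x]
    ring
  have hR2 : 2 * R = ∑ x ∈ K, ∑ y ∈ K, (φ x * φ y) * (b x y * (f x - f y) ^ 2) := by
    rw [two_mul]
    nth_rewrite 1 [hRdef]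
    rw [hswap, ← Finset.sum_add_distrib]
    refine Finset.sum_congr rfl fun x hx => ?_
    rw [← Finset.sum_add_distrib]
    refine Finset.sum_congr rfl fun y hy => ?_
    have hx2 := hfsq x (hKY x hx)
    have hy2 := hfsq y (hKY y hy)
    rw [← hx2, ← hy2]
    ring
  have hstep : 2 * R ≤ ∑ x ∈ K, ∑ y ∈ K,
      (1 / 2) * (φ x ^ 2 + φ y ^ 2) * (b x y * (f x - f y) ^ 2) := by
    rw [hR2]
    refine Finset.sum_le_sum fun x _ => Finset.sum_le_sum fun y _ => ?_
    have hb : 0 ≤ b x y * (f x - f y) ^ 2 := mul_nonneg (hnonneg x y) (sq_nonneg _)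
    nlinarith [sq_nonneg (φ x - φ y), hb]
  have hMswap : ∑ x ∈ K, ∑ y ∈ K, φ y ^ 2 * (b x y * (f x - f y) ^ 2)
      = ∑ x ∈ K, ∑ y ∈ K, φ x ^ 2 * (b x y * (f x - f y) ^ 2) := by
    rw [Finset.sum_comm]
    refine Finset.sum_congr rfl fun x _ => Finset.sum_congr rfl fun y _ => ?_
    rw [hsymm y x]
    ring
  have hsplit : ∑ x ∈ K, ∑ y ∈ K,
      (1 / 2) * (φ x ^ 2 + φ y ^ 2) * (b x y * (f x - f y) ^ 2)
      = (1 / 2) * (∑ x ∈ K, ∑ y ∈ K, φ x ^ 2 * (b x y * (f x - f y) ^ 2))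
        + (1 / 2) * (∑ x ∈ K, ∑ y ∈ K, φ y ^ 2 * (b x y * (f x - f y) ^ 2)) := by
    rw [Finset.mul_sum, Finset.mul_sum, ← Finset.sum_add_distrib]
    refine Finset.sum_congr rfl fun x _ => ?_
    rw [Finset.mul_sum, Finset.mul_sum, ← Finset.sum_add_distrib]
    refine Finset.sum_congr rfl fun y _ => ?_
    ring
  have h2R : 2 * R ≤ ∑ x ∈ K, ∑ y ∈ K, φ x ^ 2 * (b x y * (f x - f y) ^ 2) := by
    rw [hsplit, hMswap] at hstep
    linarith
  -- the eikonal bound on K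
  have heikK : ∀ x ∈ K, ∑ y ∈ K, b x y * (f x - f y) ^ 2 ≤ 2 * (γ * g x * w x) := by
    intro x hx
    have hxY := hKY x hx
    have hF0 : ∀ y, 0 ≤ (if y ∈ Y then b x y * (Real.sqrt (g x) - Real.sqrt (g y)) ^ 2 else 0) := by
      intro y
      by_cases h : y ∈ Y
      · simp only [if_pos h]
        exact mul_nonneg (hnonneg x y) (sq_nonneg _)
      · simp only [if_neg h]; exact le_rfl
    have hFsum : Summable (fun y =>
        if y ∈ Y then b x y * (Real.sqrt (g x) - Real.sqrt (g y)) ^ 2 else 0) := by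
      apply Summable.of_nonneg_of_le (f := fun y => 2 * g x * b x y + 2 * (b x y * |g y|)) hF0
      · intro y
        by_cases h : y ∈ Y
        · simp only [if_pos h]
          have h1 : (Real.sqrt (g x) - Real.sqrt (g y)) ^ 2 ≤ 2 * g x + 2 * |g y| := by
            have hx2 : Real.sqrt (g x) ^ 2 = g x := Real.sq_sqrt (hg x hxY).le
            have hy2 : Real.sqrt (g y) ^ 2 = g y := Real.sq_sqrt (hg y h).le
            have habs : g y ≤ |g y| := le_abs_self _
            nlinarith [sq_nonneg (Real.sqrt (g x) + Real.sqrt (g y))]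
          calc b x y * (Real.sqrt (g x) - Real.sqrt (g y)) ^ 2
              ≤ b x y * (2 * g x + 2 * |g y|) :=
                mul_le_mul_of_nonneg_left h1 (hnonneg x y)
            _ = 2 * g x * b x y + 2 * (b x y * |g y|) := by ring
        · simp only [if_neg h]
          have hb := hnonneg x y
          have hgx := (hg x hxY).le
          have habs := abs_nonneg (g y)
          nlinarith
      · exact ((hloc x).mul_left _).add ((hgF x hxY).mul_left 2)
    have hle : ∑ y ∈ K, b x y * (f x - f y) ^ 2
        ≤ ∑' y, if y ∈ Y then b x y * (Real.sqrt (g x) - Real.sqrt (g y)) ^ 2 else 0 := by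
      have e : ∑ y ∈ K, b x y * (f x - f y) ^ 2
          = ∑ y ∈ K, (if y ∈ Y then b x y * (Real.sqrt (g x) - Real.sqrt (g y)) ^ 2 else 0) := by
        refine Finset.sum_congr rfl fun y hy => ?_
        rw [if_pos (hKY y hy)]
      rw [e]
      exact Summable.sum_le_tsum K (fun y _ => hF0 y) hFsum
    have hek := heik x hxY
    linarith
  -- R ≤ γ S
  have hRS : R ≤ γ * S := by
    have h1 : ∑ x ∈ K, ∑ y ∈ K, φ x ^ 2 * (b x y * (f x - f y) ^ 2)
        ≤ ∑ x ∈ K, φ x ^ 2 * (2 * (γ * g x * w x)) := by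
      refine Finset.sum_le_sum fun x hx => ?_
      rw [← Finset.mul_sum]
      exact mul_le_mul_of_nonneg_left (heikK x hx) (sq_nonneg _)
    have h2 : ∑ x ∈ K, φ x ^ 2 * (2 * (γ * g x * w x)) = 2 * (γ * S) := by
      rw [hSdef, Finset.mul_sum, Finset.mul_sum]
      exact Finset.sum_congr rfl fun x _ => by ring
    rw [h2] at h1
    linarith [h2R]
  have hTS : (1 - γ) * S ≤ T := by
    rw [hQTR] at hHψ
    linarith
  -- Cauchy-Schwarz
  set A : ℝ := ∑ x ∈ K, (g x / w x) * Δ x ^ 2 with hAdef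
  have hA0 : 0 ≤ A := Finset.sum_nonneg fun x hx =>
    mul_nonneg (div_nonneg (hg x (hKY x hx)).le (hw x (hKY x hx)).le) (sq_nonneg _)
  have hCS : T ^ 2 ≤ S * A := by
    have h := Finset.sum_mul_sq_le_sq_mul_sq K
      (fun x => Real.sqrt (g x * w x) * φ x) (fun x => Real.sqrt (g x / w x) * Δ x)
    have e1 : ∑ x ∈ K, (Real.sqrt (g x * w x) * φ x) * (Real.sqrt (g x / w x) * Δ x) = T := by
      rw [hTdef]
      refine Finset.sum_congr rfl fun x hx => ?_
      have hgx := hg x (hKY x hx)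
      have hwx := hw x (hKY x hx)
      have hsq : Real.sqrt (g x * w x) * Real.sqrt (g x / w x) = g x := by
        rw [← Real.sqrt_mul (mul_pos hgx hwx).le]
        have e : g x * w x * (g x / w x) = g x ^ 2 := by
          field_simp
        rw [e, Real.sqrt_sq hgx.le]
      calc (Real.sqrt (g x * w x) * φ x) * (Real.sqrt (g x / w x) * Δ x)
          = (Real.sqrt (g x * w x) * Real.sqrt (g x / w x)) * (φ x * Δ x) := by ring
        _ = g x * φ x * Δ x := by rw [hsq]; ring
    have e2 : ∑ x ∈ K, (Real.sqrt (g x * w x) * φ x) ^ 2 = S := by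
      rw [hSdef]
      refine Finset.sum_congr rfl fun x hx => ?_
      rw [mul_pow, Real.sq_sqrt (mul_pos (hg x (hKY x hx)) (hw x (hKY x hx))).le]
    have e3 : ∑ x ∈ K, (Real.sqrt (g x / w x) * Δ x) ^ 2 = A := by
      rw [hAdef]
      refine Finset.sum_congr rfl fun x hx => ?_
      rw [mul_pow, Real.sq_sqrt (div_nonneg (hg x (hKY x hx)).le (hw x (hKY x hx)).le)]
    rw [e1, e2, e3] at h
    exact h
  -- rewrite the goal
  have hAtsum : (∑' x, if φ x = 0 then 0 else
      (g x / w x) * (∑' y, b x y * (φ x - φ y)) ^ 2) = A := by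
    rw [tsum_eq_sum (s := K) (fun x hx => by simp [hφ0 x hx]), hAdef]
    refine Finset.sum_congr rfl fun x hx => ?_
    rw [if_neg ((hmemK x).1 hx), hΔeq x]
  rw [hAtsum, hStsum]
  rcases eq_or_lt_of_le hS0 with hS | hS
  · rw [← hS, Real.sqrt_zero, mul_zero]
    exact Real.sqrt_nonneg _
  · have h1γ : 0 ≤ (1 - γ) * S := mul_nonneg (by linarith) hS0
    have hT0 : 0 ≤ T := le_trans h1γ hTS
    have hTle : T ≤ Real.sqrt S * Real.sqrt A := by
      calc T = Real.sqrt (T ^ 2) := (Real.sqrt_sq hT0).symm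
        _ ≤ Real.sqrt (S * A) := Real.sqrt_le_sqrt hCS
        _ = Real.sqrt S * Real.sqrt A := Real.sqrt_mul hS0 A
    have hss : Real.sqrt S * Real.sqrt S = S := Real.mul_self_sqrt hS0
    have hfin : (1 - γ) * Real.sqrt S * Real.sqrt S ≤ Real.sqrt A * Real.sqrt S := by
      calc (1 - γ) * Real.sqrt S * Real.sqrt S = (1 - γ) * S := by
            rw [mul_assoc, hss]
        _ ≤ T := hTS
        _ ≤ Real.sqrt S * Real.sqrt A := hTle
        _ = Real.sqrt A * Real.sqrt S := mul_comm _ _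
    have hsqpos : 0 < Real.sqrt S := Real.sqrt_pos.2 hS
    exact le_of_mul_le_mul_right hfin hsqpos
end

section
/- Fix 0 < α < 1. The function ϑ(t) = ((1−t^α)/(1−t))² for t ≠ 1, ϑ(1) = α², is strictly monotonically decreasing on (0,∞). -/
open Real Classical

/-!
For `t ≠ 1`, `(1 - t^α) / (1 - t)` is the slope of the secant of `t ↦ t^α` through `1` and `t`,
and its value `α` at `t = 1` is the derivative there. Secant slopes through a fixed point of a
strictly concave function strictly decrease, and the tangent slope lies strictly between the
slopes of secants to the left and to the right. The slopes are positive because `t ↦ t^α` is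
increasing, so their squares still decrease strictly.
-/

open Set

theorem StrictConcaveOn.strictAntiOn_update_slope {S : Set ℝ} {f : ℝ → ℝ} {a f' : ℝ}
    (hf : StrictConcaveOn ℝ S f) (ha : a ∈ S) (hf' : HasDerivAt f f' a) :
    StrictAntiOn (Function.update (slope f a) a f') S := by
  intro x hx y hy hxy
  rcases eq_or_ne x a with rfl | hxa
  · rw [Function.update_self, Function.update_of_ne hxy.ne']
    exact hf.slope_lt_of_hasDerivAt hx hy hxy hf'
  rcases eq_or_ne y a with rfl | hya
  · rw [Function.update_self, Function.update_of_ne hxy.ne, slope_comm]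
    exact hf.lt_slope_of_hasDerivAt hx hy hxy hf'
  rw [Function.update_of_ne hxa, Function.update_of_ne hya]
  simpa only [slope_def_field] using hf.secant_strict_mono ha hx hy hxa hya hxy

theorem StrictAntiOn.pow_of_nonneg {S : Set ℝ} {g : ℝ → ℝ} (hg : StrictAntiOn g S)
    (hg₀ : ∀ t ∈ S, 0 ≤ g t) {n : ℕ} (hn : n ≠ 0) : StrictAntiOn (fun t => g t ^ n) S :=
  fun _ hx _ hy hxy => pow_lt_pow_left₀ (hg hx hy hxy) (hg₀ _ hy) hn

theorem stmt6
    (α : ℝ) (hα0 : 0 < α) (hα1 : α < 1) :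
    StrictAntiOn (fun t : ℝ => if t = 1 then α ^ 2 else ((1 - t ^ α) / (1 - t)) ^ 2)
      (Set.Ioi (0 : ℝ)) := by
  set g := Function.update (slope (fun t : ℝ => t ^ α) 1) 1 α
  have hderiv : HasDerivAt (fun t : ℝ => t ^ α) α 1 := by
    simpa using hasDerivAt_rpow_const (p := α) (Or.inl one_ne_zero)
  have hg_anti : StrictAntiOn g (Ici 0) :=
    (strictConcaveOn_rpow hα0 hα1).strictAntiOn_update_slope
      (mem_Ici.mpr zero_le_one) hderiv
  have hg_nonneg : ∀ t ∈ Ici 0, 0 ≤ g t := by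
    intro t ht
    rcases eq_or_ne t 1 with rfl | ht1
    · simpa [g] using hα0.le
    simp only [g, Function.update_of_ne ht1]
    exact ((strictMonoOn_rpow_Ici_of_exponent_pos hα0).slope_pos
      (mem_Ici.mpr zero_le_one) ht ht1.symm).le
  refine ((hg_anti.pow_of_nonneg hg_nonneg two_ne_zero).mono Ioi_subset_Ici_self).congr fun t _ => ?_
  rcases eq_or_ne t 1 with rfl | ht1
  · simp [g]
  simp only [g, if_neg ht1, Function.update_of_ne ht1]
  rw [slope_def_field, one_rpow, ← neg_div_neg_eq, neg_sub, neg_sub]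
end

section
/- For every c > 0 and 0 < ε < 1, the function θ(t) = log(t+1) on [c,∞) satisfies |θ(t) − θ(at)| ≤ γ^{1/2} |1−a| θ(t) for all t ≥ c and a ≥ ε with at ≥ c, where γ = ((1 − log(cε+1)/log(c+1))/(1−ε))², and 0 ≤ γ < 1. -/
open Real

-- Bernoulli-type: (s*t+1)*log(s*t+1) ≤ s*((t+1)*log(t+1)) for 0 ≤ s ≤ 1, 0 ≤ t
lemma aux1_s8 (s t : ℝ) (hs0 : 0 ≤ s) (hs1 : s ≤ 1) (ht : 0 ≤ t) :
    (s * t + 1) * Real.log (s * t + 1) ≤ s * ((t + 1) * Real.log (t + 1)) := by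
  have h := Real.convexOn_mul_log.2 (x := t + 1) (y := 1)
    (by simp; linarith) (by norm_num) hs0 (by linarith : (0:ℝ) ≤ 1 - s) (by ring)
  have he : s • (t + 1) + (1 - s) • (1:ℝ) = s * t + 1 := by simp [smul_eq_mul]; ring
  rw [he] at h
  simpa [smul_eq_mul] using h

-- Monotonicity consequence: for t ≥ c,  log(c*ε+1)*log(t+1) ≤ log(ε*t+1)*log(c+1)
set_option maxHeartbeats 1000000 in
lemma aux2_s8 (c ε : ℝ) (hc : 0 < c) (hε0 : 0 < ε) (hε1 : ε < 1) :
    ∀ t : ℝ, c ≤ t → Real.log (c * ε + 1) * Real.log (t + 1)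
      ≤ Real.log (ε * t + 1) * Real.log (c + 1) := by
  set F : ℝ → ℝ := fun x => Real.log (ε * x + 1) * Real.log (c + 1)
      - Real.log (c * ε + 1) * Real.log (x + 1) with hF
  have hd : ∀ x : ℝ, c ≤ x → HasDerivAt F
      (ε / (ε * x + 1) * Real.log (c + 1) - Real.log (c * ε + 1) * (1 / (x + 1))) x := by
    intro x hx
    have hx0 : 0 < x := lt_of_lt_of_le hc hx
    have h1 : HasDerivAt (fun y : ℝ => ε * y + 1) ε x := by
      simpa using ((hasDerivAt_id x).const_mul ε).add_const 1
    have h2 : HasDerivAt (fun y : ℝ => Real.log (ε * y + 1)) (ε / (ε * x + 1)) x :=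
      h1.log (by positivity)
    have h3 : HasDerivAt (fun y : ℝ => y + 1) 1 x := (hasDerivAt_id x).add_const 1
    have h4 : HasDerivAt (fun y : ℝ => Real.log (y + 1)) (1 / (x + 1)) x := by
      simpa using h3.log (by positivity)
    exact (h2.mul_const _).sub (h4.const_mul _)
  have hlogc : 0 < Real.log (c + 1) := Real.log_pos (by linarith)
  have hlogcε : 0 ≤ Real.log (c * ε + 1) := Real.log_nonneg (by nlinarith)
  have hA : (ε * c + 1) * Real.log (ε * c + 1) ≤ ε * ((c + 1) * Real.log (c + 1)) :=
    aux1_s8 ε c hε0.le hε1.le hc.le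
  have hmono : MonotoneOn F (Set.Ici c) := by
    apply monotoneOn_of_deriv_nonneg (convex_Ici c)
    · exact fun x hx => ((hd x hx).differentiableAt.continuousAt).continuousWithinAt
    · intro x hx
      rw [interior_Ici] at hx
      exact ((hd x (le_of_lt hx)).differentiableAt).differentiableWithinAt
    · intro x hx
      rw [interior_Ici] at hx
      rw [(hd x hx.le).deriv]
      have hx0 : 0 < x := lt_of_lt_of_le hc hx.le
      have hx' : c < x := hx
      have key : Real.log (c * ε + 1) * (ε * x + 1) ≤ ε * Real.log (c + 1) * (x + 1) := by
        have hcm : c * ε = ε * c := mul_comm c ε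
        rw [hcm]
        nlinarith [mul_le_mul_of_nonneg_left hA (by positivity : (0:ℝ) ≤ ε * x + 1),
          mul_pos (by positivity : (0:ℝ) < ε * c + 1) (by positivity : (0:ℝ) < x + 1),
          mul_nonneg (Real.log_nonneg (by nlinarith : (1:ℝ) ≤ ε * c + 1))
            (by nlinarith : (0:ℝ) ≤ (1 - ε) * (x - c))]
      have hdiv : Real.log (c * ε + 1) / (x + 1) ≤ ε * Real.log (c + 1) / (ε * x + 1) := by
        rw [div_le_div_iff₀ (by positivity) (by positivity)]
        nlinarith [key]
      have e1 : Real.log (c * ε + 1) * (1 / (x + 1)) = Real.log (c * ε + 1) / (x + 1) := by ring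
      have e2 : ε / (ε * x + 1) * Real.log (c + 1) = ε * Real.log (c + 1) / (ε * x + 1) := by ring
      rw [e1, e2]
      linarith
  intro t ht
  have h0 : F c ≤ F t := hmono (Set.self_mem_Ici) ht ht
  simp only [hF] at h0
  rw [mul_comm ε c] at h0
  linarith

set_option maxHeartbeats 1000000 in
theorem stmt8
    (c ε : ℝ) (hc : 0 < c) (hε0 : 0 < ε) (hε1 : ε < 1) :
    (0 ≤ ((1 - Real.log (c * ε + 1) / Real.log (c + 1)) / (1 - ε)) ^ 2 ∧
      ((1 - Real.log (c * ε + 1) / Real.log (c + 1)) / (1 - ε)) ^ 2 < 1) ∧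
    ∀ t a : ℝ, c ≤ t → ε ≤ a → c ≤ a * t →
      |Real.log (t + 1) - Real.log (a * t + 1)|
        ≤ Real.sqrt (((1 - Real.log (c * ε + 1) / Real.log (c + 1)) / (1 - ε)) ^ 2)
            * |1 - a| * Real.log (t + 1) := by
  have hε1' : 0 < 1 - ε := by linarith
  have hlogc : 0 < Real.log (c + 1) := Real.log_pos (by linarith)
  have hcε : 0 < c * ε := mul_pos hc hε0
  have hlogcε : 0 ≤ Real.log (c * ε + 1) := Real.log_nonneg (by linarith)
  have hlt : Real.log (c * ε + 1) < Real.log (c + 1) :=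
    Real.log_lt_log (by linarith) (by nlinarith)
  set γ : ℝ := (1 - Real.log (c * ε + 1) / Real.log (c + 1)) / (1 - ε) with hγ
  clear_value γ
  -- strict concavity gives ε * log(c+1) < log(c*ε+1)
  have hconc : ε * Real.log (c + 1) < Real.log (c * ε + 1) := by
    have h := strictConcaveOn_log_Ioi.2 (x := c + 1) (y := 1)
      (by simp; linarith) (by norm_num) (by linarith : c + 1 ≠ 1) hε0 hε1' (by ring)
    have he : ε • (c + 1) + (1 - ε) • (1:ℝ) = c * ε + 1 := by simp [smul_eq_mul]; ring
    rw [he] at h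
    simpa [smul_eq_mul, Real.log_one] using h
  have hγpos : 0 < γ := by
    rw [hγ]
    apply div_pos _ hε1'
    rw [sub_pos, div_lt_one hlogc]; exact hlt
  have hγ1 : γ < 1 := by
    rw [hγ, div_lt_one hε1', sub_lt_sub_iff_left, lt_div_iff₀ hlogc]
    linarith
  have hsq : Real.sqrt (γ ^ 2) = γ := by
    rw [Real.sqrt_sq hγpos.le]
  refine ⟨⟨sq_nonneg _, ?_⟩, ?_⟩
  · exact pow_lt_one₀ hγpos.le hγ1 two_ne_zero
  intro t a ht ha hat
  rw [hsq]
  have ht0 : 0 < t := lt_of_lt_of_le hc ht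
  have ha0 : 0 < a := lt_of_lt_of_le hε0 ha
  have hlogt : 0 < Real.log (t + 1) := Real.log_pos (by linarith)
  -- γ expressed multiplicatively
  have hγmul : γ * ((1 - ε) * Real.log (c + 1)) = Real.log (c + 1) - Real.log (c * ε + 1) := by
    rw [hγ]; field_simp
  rcases le_or_gt 1 a with h1a | h1a
  · -- case a ≥ 1
    have hle : Real.log (t + 1) ≤ Real.log (a * t + 1) :=
      Real.log_le_log (by linarith) (by nlinarith)
    rw [abs_of_nonpos (by linarith), abs_of_nonpos (by linarith), neg_sub, neg_sub]
    -- bound 1 : log(a*t+1) - log(t+1) ≤ (a-1)*t/(t+1)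
    have hb1 : Real.log (a * t + 1) - Real.log (t + 1) ≤ (a - 1) * t / (t + 1) := by
      have h := Real.log_le_sub_one_of_pos (x := (a * t + 1) / (t + 1)) (by positivity)
      rw [Real.log_div (by positivity) (by positivity)] at h
      have : (a * t + 1) / (t + 1) - 1 = (a - 1) * t / (t + 1) := by field_simp; ring
      linarith [this ▸ h]
    -- bound 2 : t/(t+1) ≤ γ * log(t+1)
    have hb2 : t / (t + 1) ≤ γ * Real.log (t + 1) := by
      -- step 2a: c ≤ γ * log(c+1) * (c+1)
      have h2a : c * (1 - ε) / (c + 1) ≤ Real.log (c + 1) - Real.log (c * ε + 1) := by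
        have h := Real.log_le_sub_one_of_pos (x := (c * ε + 1) / (c + 1)) (by positivity)
        rw [Real.log_div (by positivity) (by positivity)] at h
        have he : (c * ε + 1) / (c + 1) - 1 = -(c * (1 - ε)) / (c + 1) := by field_simp; ring
        rw [he, neg_div] at h
        linarith [h]
      -- step 2b : t*((c+1)*log(c+1)) ≤ c*((t+1)*log(t+1))  (aux1 with s = c/t)
      have h2b : t * ((c + 1) * Real.log (c + 1)) ≤ c * ((t + 1) * Real.log (t + 1)) := by
        have h := aux1_s8 (c / t) t (by positivity) (by rw [div_le_one ht0]; exact ht) ht0.le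
        rw [div_mul_cancel₀ c (ne_of_gt ht0)] at h
        calc t * ((c + 1) * Real.log (c + 1)) ≤ t * (c / t * ((t + 1) * Real.log (t + 1))) := by
              apply mul_le_mul_of_nonneg_left h ht0.le
          _ = c * ((t + 1) * Real.log (t + 1)) := by field_simp
      -- combine
      rw [div_le_iff₀ (by positivity : (0:ℝ) < t + 1)]
      -- goal : t ≤ γ * log(t+1) * (t+1)
      have hc2a : c ≤ γ * Real.log (c + 1) * (c + 1) := by
        have := (div_le_iff₀ (by positivity : (0:ℝ) < c + 1)).mp h2a
        nlinarith [hγmul]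
      nlinarith [mul_le_mul_of_nonneg_left h2b (le_of_lt hγpos),
        mul_le_mul_of_nonneg_right hc2a (mul_nonneg hlogt.le (by positivity : (0:ℝ) ≤ t + 1)),
        mul_pos hlogc (by positivity : (0:ℝ) < c + 1)]
    calc Real.log (a * t + 1) - Real.log (t + 1) ≤ (a - 1) * t / (t + 1) := hb1
      _ = (a - 1) * (t / (t + 1)) := by ring
      _ ≤ (a - 1) * (γ * Real.log (t + 1)) :=
          mul_le_mul_of_nonneg_left hb2 (by linarith)
      _ = γ * (a - 1) * Real.log (t + 1) := by ring
  · -- case ε ≤ a < 1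
    have hle : Real.log (a * t + 1) ≤ Real.log (t + 1) :=
      Real.log_le_log (by positivity) (by nlinarith)
    rw [abs_of_nonneg (by linarith), abs_of_nonneg (by linarith)]
    set lam : ℝ := (1 - a) / (1 - ε) with hlam
    clear_value lam
    have hlam0 : 0 ≤ lam := by rw [hlam]; exact div_nonneg (by linarith) (by linarith)
    have hlam1 : lam ≤ 1 := by rw [hlam, div_le_one hε1']; linarith
    -- concavity chord: lam * log(ε*t+1) + (1-lam) * log(t+1) ≤ log(a*t+1)
    have hchord : lam * Real.log (ε * t + 1) + (1 - lam) * Real.log (t + 1)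
        ≤ Real.log (a * t + 1) := by
      have hb' : (0:ℝ) ≤ 1 - lam := by linarith
      have hsum' : lam + (1 - lam) = 1 := by ring
      have hm1 : ε * t + 1 ∈ Set.Ioi (0:ℝ) := by simp; positivity
      have hm2 : t + 1 ∈ Set.Ioi (0:ℝ) := by simp; positivity
      have h := strictConcaveOn_log_Ioi.concaveOn.2 hm1 hm2 hlam0 hb' hsum'
      have he : lam • (ε * t + 1) + (1 - lam) • (t + 1) = a * t + 1 := by
        simp only [smul_eq_mul, hlam]
        field_simp
        ring
      rw [he] at h
      simpa [smul_eq_mul] using h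
    -- aux2 : log(c*ε+1)*log(t+1) ≤ log(ε*t+1)*log(c+1)
    have h2 := aux2_s8 c ε hc hε0 hε1 t ht
    -- log(t+1) - log(ε*t+1) ≤ (1-ε)*γ*log(t+1)
    have hkey : Real.log (t + 1) - Real.log (ε * t + 1) ≤ (1 - ε) * γ * Real.log (t + 1) := by
      have he : (1 - ε) * γ = 1 - Real.log (c * ε + 1) / Real.log (c + 1) := by
        rw [hγ]; field_simp
      rw [he]
      have : Real.log (c * ε + 1) / Real.log (c + 1) * Real.log (t + 1)
          ≤ Real.log (ε * t + 1) := by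
        rw [div_mul_eq_mul_div, div_le_iff₀ hlogc]
        exact h2
      nlinarith [this]

    have hstep : Real.log (t + 1) - Real.log (a * t + 1)
        ≤ lam * (Real.log (t + 1) - Real.log (ε * t + 1)) := by linarith [hchord]
    have hlamε : lam * (1 - ε) = 1 - a := by
      rw [hlam]; exact div_mul_cancel₀ _ (ne_of_gt hε1')
    calc Real.log (t + 1) - Real.log (a * t + 1)
        ≤ lam * (Real.log (t + 1) - Real.log (ε * t + 1)) := hstep
      _ ≤ lam * ((1 - ε) * γ * Real.log (t + 1)) :=
          mul_le_mul_of_nonneg_left hkey hlam0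
      _ = (lam * (1 - ε)) * γ * Real.log (t + 1) := by ring
      _ = γ * (1 - a) * Real.log (t + 1) := by rw [hlamε]; ring
end

section
/- For a > 1 and t > 0, with f(a) = (at+1)log(at+1), one has f(a) − a f(1) ≥ (a−1)(t − log(t+1)) ≥ 0. -/
open Real

theorem stmt11
    (a t : ℝ) (ha : 1 < a) (ht : 0 < t) :
    (a * t + 1) * Real.log (a * t + 1) - a * ((t + 1) * Real.log (t + 1))
        ≥ (a - 1) * (t - Real.log (t + 1)) ∧
      (a - 1) * (t - Real.log (t + 1)) ≥ 0 := by
  have hv : (0:ℝ) < t + 1 := by linarith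
  have hu : (0:ℝ) < a * t + 1 := by nlinarith
  have hlog : Real.log (t + 1) ≤ t := by
    have := Real.log_le_sub_one_of_pos hv
    linarith
  refine ⟨?_, by nlinarith⟩
  have h1 : Real.log ((t + 1) / (a * t + 1)) ≤ (t + 1) / (a * t + 1) - 1 :=
    Real.log_le_sub_one_of_pos (by positivity)
  rw [Real.log_div (by linarith) (by linarith)] at h1
  have h3 : Real.log (a * t + 1) - Real.log (t + 1) ≥ 1 - (t + 1) / (a * t + 1) := by
    linarith
  have h2 : (a * t + 1) * (Real.log (a * t + 1) - Real.log (t + 1)) ≥ (a - 1) * t := by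
    calc (a * t + 1) * (Real.log (a * t + 1) - Real.log (t + 1))
        ≥ (a * t + 1) * (1 - (t + 1) / (a * t + 1)) := by
          exact mul_le_mul_of_nonneg_left h3 hu.le
      _ = (a - 1) * t := by field_simp; ring
  nlinarith [h2]
end

section
/- On the line graph ℕ₀ with standard weights (k ∼ l iff |k−l| = 1), the Hardy weight w(k) = 2 − (1+1/k)^{1/2} − (1−1/k)^{1/2} satisfies w(k) > 1/(4k²) for all k ≥ 2, and w(1) = 2 − √2 > 1/4. -/
open Real

theorem stmt13 :
    (∀ k : ℕ, 2 ≤ k →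
      2 - Real.sqrt (1 + 1 / (k : ℝ)) - Real.sqrt (1 - 1 / (k : ℝ))
        > 1 / (4 * (k : ℝ) ^ 2)) ∧
    (2 - Real.sqrt 2 > 1 / 4) := by
  constructor
  · intro k hk
    have hk2 : (2:ℝ) ≤ (k:ℝ) := by exact_mod_cast hk
    set x : ℝ := 1 / (k:ℝ) with hxdef
    have hx0 : 0 < x := by positivity
    have hx2 : x ≤ 1/2 := by
      rw [hxdef, div_le_div_iff₀ (by linarith) (by norm_num)]
      linarith
    have ha : Real.sqrt (1+x) < 1 + x/2 - x^2/8 + x^3/16 := by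
      have hc : (0:ℝ) < 1 + x/2 - x^2/8 + x^3/16 := by nlinarith
      rw [show (1 + x/2 - x^2/8 + x^3/16 : ℝ) = Real.sqrt ((1 + x/2 - x^2/8 + x^3/16)^2) from
        (Real.sqrt_sq hc.le).symm]
      apply Real.sqrt_lt_sqrt (by linarith)
      nlinarith [pow_pos hx0 4, pow_pos hx0 6, sq_nonneg x]
    have hb : Real.sqrt (1-x) ≤ 1 - x/2 - x^2/8 - x^3/16 := by
      have hd : (0:ℝ) ≤ 1 - x/2 - x^2/8 - x^3/16 := by nlinarith
      rw [show (1 - x/2 - x^2/8 - x^3/16 : ℝ) = Real.sqrt ((1 - x/2 - x^2/8 - x^3/16)^2) from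
        (Real.sqrt_sq hd).symm]
      apply Real.sqrt_le_sqrt
      nlinarith [pow_pos hx0 4, pow_pos hx0 5, pow_pos hx0 6]
    have heq : 1 / (4 * (k:ℝ)^2) = x^2/4 := by
      rw [hxdef]; field_simp
    rw [heq]
    nlinarith [ha, hb]
  · nlinarith [Real.sq_sqrt (by norm_num : (0:ℝ) ≤ 2), Real.sqrt_nonneg 2,
      sq_nonneg (Real.sqrt 2 - 7/4)]
end

section
/- Let H = (1/m)Δ + q be a Schrödinger operator on a graph b over (X,m) satisfying the Hardy inequality ∑_X(|∇φ|² + m q φ²) ≥ ∑_X m w φ² for all φ ∈ C_c(X) with a strictly positive weight w, and suppose a strictly positive harmonic-minorant u > 0 with Hu ≥ 0 exists. If g ∈ F(X) is strictly positive with |∇(g^{1/2})|² ≤ γ g w m pointwise on X for some 0 < γ < 1, then for all φ ∈ C_c(X): (∑_{x ∈ supp φ} (g/w)(x) m(x) (Hφ(x))²)^{1/2} ≥ (1−γ)(∑_X g w m φ²)^{1/2}. -/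
open Real

private lemma symmetrize_sum {X : Type*} (S : Finset X) (F : X → X → ℝ) :
    ∑ x ∈ S, ∑ y ∈ S, F x y = (1/2) * ∑ x ∈ S, ∑ y ∈ S, (F x y + F y x) := by
  have h : ∑ x ∈ S, ∑ y ∈ S, F y x = ∑ x ∈ S, ∑ y ∈ S, F x y := Finset.sum_comm
  simp only [Finset.sum_add_distrib, h]
  ring

set_option maxHeartbeats 2000000 in
theorem stmt16
    (X : Type*) [Countable X] [Infinite X]
    (b : X → X → ℝ)
    (hsymm : ∀ x y, b x y = b y x)
    (hdiag : ∀ x, b x x = 0)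
    (hnonneg : ∀ x y, 0 ≤ b x y)
    (hloc : ∀ x, Summable (fun y => b x y))
    (m : X → ℝ) (hm : ∀ x, 0 < m x)
    (q : X → ℝ)
    (H : (X → ℝ) → (X → ℝ))
    (hH : ∀ f x, H f x = (1 / m x) * (∑' y, b x y * (f x - f y)) + q x * f x)
    (w : X → ℝ) (hw : ∀ x, 0 < w x)
    (hHardy : ∀ ψ : X → ℝ, (Function.support ψ).Finite →
      (∑' x, (((1 / 2) * ∑' y, b x y * (ψ x - ψ y) ^ 2) + m x * q x * ψ x ^ 2))
        ≥ ∑' x, m x * w x * ψ x ^ 2)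
    (u : X → ℝ) (hu : ∀ x, 0 < u x)
    (huF : ∀ x, Summable (fun y => b x y * |u y|))
    (hHu : ∀ x, 0 ≤ H u x)
    (g : X → ℝ) (hg : ∀ x, 0 < g x)
    (hgF : ∀ x, Summable (fun y => b x y * |g y|))
    (γ : ℝ) (hγ0 : 0 < γ) (hγ1 : γ < 1)
    (heik : ∀ x, (1 / 2) * ∑' y, b x y * (Real.sqrt (g x) - Real.sqrt (g y)) ^ 2
      ≤ γ * g x * w x * m x)
    (φ : X → ℝ) (hφ : (Function.support φ).Finite) :
    Real.sqrt (∑' x, if φ x = 0 then 0 else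
        (g x / w x) * m x * (H φ x) ^ 2)
      ≥ (1 - γ) * Real.sqrt (∑' x, g x * w x * m x * φ x ^ 2) := by
  classical
  set S : Finset X := hφ.toFinset with hSdef
  have hmemS : ∀ x : X, x ∈ S ↔ φ x ≠ 0 := by
    intro x; simp [hSdef, Set.Finite.mem_toFinset, Function.mem_support]
  have hφ0 : ∀ x ∉ S, φ x = 0 := fun x hx => by
    by_contra hc; exact hx ((hmemS x).2 hc)
  set h : X → ℝ := fun x => Real.sqrt (g x) with hhdef
  have hh2 : ∀ x, h x ^ 2 = g x := fun x => Real.sq_sqrt (hg x).le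
  have heik' : ∀ x, (1 / 2) * ∑' y, b x y * (h x - h y) ^ 2 ≤ γ * g x * w x * m x := by
    intro x; simpa only [hhdef] using heik x
  set ψ : X → ℝ := fun x => h x * φ x with hψdef
  have hψ0 : ∀ x ∉ S, ψ x = 0 := fun x hx => by simp [hψdef, hφ0 x hx]
  have sb' : ∀ y, Summable (fun x => b x y) := fun y =>
    (hloc y).congr (fun x => hsymm y x)
  have sfin : ∀ (x : X) (f : X → ℝ), (∀ z ∉ S, f z = 0) →
      Summable (fun y => b x y * f y) := by
    intro x f hf
    exact summable_of_ne_finset_zero (s := S) (fun y hy => by rw [hf y hy, mul_zero])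
  have tfin : ∀ (x : X) (f : X → ℝ), (∀ z ∉ S, f z = 0) →
      ∑' y, b x y * f y = ∑ y ∈ S, b x y * f y := by
    intro x f hf
    exact tsum_eq_sum (fun y hy => by rw [hf y hy, mul_zero])
  -- expansion of the inner sum for φ
  have inner1 : ∀ x, (∑' y, b x y * (φ x - φ y))
      = φ x * (∑' y, b x y) - ∑ y ∈ S, b x y * φ y := by
    intro x
    have e : ∀ y, b x y * (φ x - φ y) = b x y * φ x - b x y * φ y := fun y => by ring
    rw [tsum_congr e, Summable.tsum_sub ((hloc x).mul_right (φ x)) (sfin x φ hφ0),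
      tsum_mul_right, tfin x φ hφ0]
    ring
  -- expansion of the inner sum for ψ
  have hψsq0 : ∀ z ∉ S, ψ z ^ 2 = 0 := fun z hz => by rw [hψ0 z hz]; ring
  have inner2 : ∀ x, (∑' y, b x y * (ψ x - ψ y) ^ 2)
      = ψ x ^ 2 * (∑' y, b x y) - 2 * ψ x * ∑ y ∈ S, b x y * ψ y
        + ∑ y ∈ S, b x y * ψ y ^ 2 := by
    intro x
    have e : ∀ y, b x y * (ψ x - ψ y) ^ 2
        = (b x y * ψ x ^ 2 - 2 * ψ x * (b x y * ψ y)) + b x y * ψ y ^ 2 := fun y => by ring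
    rw [tsum_congr e,
      Summable.tsum_add (((hloc x).mul_right (ψ x ^ 2)).sub ((sfin x ψ hψ0).mul_left (2 * ψ x)))
        (sfin x (fun z => ψ z ^ 2) hψsq0),
      Summable.tsum_sub ((hloc x).mul_right (ψ x ^ 2)) ((sfin x ψ hψ0).mul_left (2 * ψ x)),
      tsum_mul_right, tsum_mul_left, tfin x ψ hψ0, tfin x (fun z => ψ z ^ 2) hψsq0]
    ring
  -- decompose the Hardy energy of ψ
  set f1 : X → ℝ := fun x => (1/2) * (ψ x ^ 2 * (∑' y, b x y))
      - ψ x * (∑ y ∈ S, b x y * ψ y) + m x * q x * ψ x ^ 2 with hf1def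
  set f2 : X → ℝ := fun x => ∑ y ∈ S, (1/2) * (b x y * ψ y ^ 2) with hf2def
  have hT : ∀ x, (1 / 2) * (∑' y, b x y * (ψ x - ψ y) ^ 2) + m x * q x * ψ x ^ 2
      = f1 x + f2 x := by
    intro x
    rw [inner2 x]
    simp only [hf1def, hf2def, ← Finset.mul_sum]
    ring
  have hf1sum : Summable f1 := by
    apply summable_of_ne_finset_zero (s := S)
    intro x hx
    simp [hf1def, hψ0 x hx]
  have hf2sum : Summable f2 := by
    apply summable_sum
    intro y _
    exact ((sb' y).mul_right (ψ y ^ 2)).mul_left (1/2)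
  have hbswap : ∀ y, (∑' x, b x y) = ∑' z, b y z := fun y => tsum_congr (fun x => hsymm x y)
  have hf2tsum : ∑' x, f2 x = ∑ y ∈ S, (1/2) * (ψ y ^ 2 * (∑' z, b y z)) := by
    rw [hf2def, Summable.tsum_finsetSum (fun y _ => ((sb' y).mul_right (ψ y ^ 2)).mul_left (1/2))]
    apply Finset.sum_congr rfl
    intro y _
    rw [tsum_mul_left, tsum_mul_right, hbswap y]
    ring
  have hTsum : (∑' x, ((1 / 2) * (∑' y, b x y * (ψ x - ψ y) ^ 2) + m x * q x * ψ x ^ 2))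
      = ∑ x ∈ S, f1 x + ∑ y ∈ S, (1/2) * (ψ y ^ 2 * (∑' z, b y z)) := by
    rw [tsum_congr hT, Summable.tsum_add hf1sum hf2sum, hf2tsum,
      tsum_eq_sum (f := f1) (s := S) (fun x hx => by simp [hf1def, hψ0 x hx])]
  -- Hardy inequality applied to ψ
  have hsuppψ : (Function.support ψ).Finite := by
    apply hφ.subset
    intro x hx
    simp only [Function.mem_support] at hx ⊢
    intro hc
    exact hx (by simp [hψdef, hc])
  have hHψ := hHardy ψ hsuppψ
  set A : ℝ := ∑ x ∈ S, g x * w x * m x * φ x ^ 2 with hAdef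
  have hgwm : ∀ x, 0 ≤ g x * w x * m x := fun x =>
    mul_nonneg (mul_nonneg (hg x).le (hw x).le) (hm x).le
  have hgw : ∀ x, 0 ≤ (g x / w x) * m x := fun x =>
    mul_nonneg (div_nonneg (hg x).le (hw x).le) (hm x).le
  have hA0 : 0 ≤ A := Finset.sum_nonneg (fun x _ => mul_nonneg (hgwm x) (sq_nonneg _))
  have hAψ : (∑' x, m x * w x * ψ x ^ 2) = A := by
    rw [tsum_eq_sum (s := S) (fun x hx => by rw [hψ0 x hx]; ring)]
    apply Finset.sum_congr rfl
    intro x _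
    simp only [hψdef]
    rw [mul_pow, hh2 x]
    ring
  have hHardyA : ∑ x ∈ S, f1 x + ∑ y ∈ S, (1/2) * (ψ y ^ 2 * (∑' z, b y z)) ≥ A := by
    rw [← hTsum, ← hAψ]; exact hHψ
  -- Green's formula side
  set K : ℝ := ∑ x ∈ S, m x * H φ x * (g x * φ x) with hKdef
  set P : ℝ := ∑ x ∈ S, ψ x * (∑ y ∈ S, b x y * ψ y) with hPdef
  set Q : ℝ := ∑ x ∈ S, (g x * φ x) * (∑ y ∈ S, b x y * φ y) with hQdef
  have hKT : K = (∑ x ∈ S, f1 x + ∑ y ∈ S, (1/2) * (ψ y ^ 2 * (∑' z, b y z))) + (P - Q) := by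
    rw [hKdef, hPdef, hQdef]
    rw [show (∑ x ∈ S, f1 x + ∑ y ∈ S, (1/2) * (ψ y ^ 2 * (∑' z, b y z)))
        + ((∑ x ∈ S, ψ x * (∑ y ∈ S, b x y * ψ y))
          - ∑ x ∈ S, (g x * φ x) * (∑ y ∈ S, b x y * φ y))
      = ∑ x ∈ S, (f1 x + (1/2) * (ψ x ^ 2 * (∑' z, b x z))
          + (ψ x * (∑ y ∈ S, b x y * ψ y) - (g x * φ x) * (∑ y ∈ S, b x y * φ y))) by
        simp only [Finset.sum_add_distrib, Finset.sum_sub_distrib]]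
    apply Finset.sum_congr rfl
    intro x _
    rw [hH φ x, hf1def]
    have hm' : m x ≠ 0 := (hm x).ne'
    rw [inner1 x]
    simp only [hψdef]
    rw [← hh2 x]
    field_simp
    ring
  -- the difference Q - P is the square-root cross term
  have hQP : Q - P = (1/2) * ∑ x ∈ S, ∑ y ∈ S, b x y * (φ x * φ y) * (h x - h y) ^ 2 := by
    rw [hQdef, hPdef]
    simp only [Finset.mul_sum]
    rw [← Finset.sum_sub_distrib]
    simp only [← Finset.sum_sub_distrib]
    rw [symmetrize_sum S (fun x y => (g x * φ x) * (b x y * φ y) - ψ x * (b x y * ψ y))]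
    simp only [Finset.mul_sum]
    apply Finset.sum_congr rfl
    intro x _
    apply Finset.sum_congr rfl
    intro y _
    rw [hsymm y x]
    simp only [hψdef]
    rw [← hh2 x, ← hh2 y]
    ring
  -- bound on the cross term
  have hsumFD : ∀ x, Summable (fun y => b x y * (h x - h y) ^ 2) := by
    intro x
    refine Summable.of_nonneg_of_le
      (fun y => mul_nonneg (hnonneg x y) (sq_nonneg _)) (fun y => ?_)
      (((hloc x).mul_right (2 * g x)).add ((hgF x).mul_left 2))
    have h1 : (h x - h y) ^ 2 ≤ 2 * g x + 2 * |g y| := by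
      nlinarith [sq_nonneg (h x + h y), hh2 x, hh2 y, le_abs_self (g y)]
    calc b x y * (h x - h y) ^ 2 ≤ b x y * (2 * g x + 2 * |g y|) :=
          mul_le_mul_of_nonneg_left h1 (hnonneg x y)
      _ = b x y * (2 * g x) + 2 * (b x y * |g y|) := by ring
  have hFDle : ∀ x, ∑ y ∈ S, b x y * (h x - h y) ^ 2 ≤ 2 * (γ * g x * w x * m x) := by
    intro x
    have h1 : ∑ y ∈ S, b x y * (h x - h y) ^ 2 ≤ ∑' y, b x y * (h x - h y) ^ 2 :=
      Summable.sum_le_tsum S (fun y _ => mul_nonneg (hnonneg x y) (sq_nonneg _)) (hsumFD x)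
    linarith [heik' x]
  have hC2 : ∑ x ∈ S, ∑ y ∈ S, b x y * (φ x * φ y) * (h x - h y) ^ 2
      ≤ ∑ x ∈ S, ∑ y ∈ S, b x y * φ x ^ 2 * (h x - h y) ^ 2 := by
    rw [symmetrize_sum S (fun x y => b x y * (φ x * φ y) * (h x - h y) ^ 2),
      symmetrize_sum S (fun x y => b x y * φ x ^ 2 * (h x - h y) ^ 2)]
    apply mul_le_mul_of_nonneg_left _ (by norm_num : (0:ℝ) ≤ 1/2)
    apply Finset.sum_le_sum
    intro x _
    apply Finset.sum_le_sum
    intro y _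
    rw [hsymm y x]
    have hsq : (h y - h x) ^ 2 = (h x - h y) ^ 2 := by ring
    rw [hsq]
    nlinarith [mul_nonneg (mul_nonneg (hnonneg x y) (sq_nonneg (h x - h y)))
      (sq_nonneg (φ x - φ y))]
  have hCle : (1/2) * ∑ x ∈ S, ∑ y ∈ S, b x y * (φ x * φ y) * (h x - h y) ^ 2 ≤ γ * A := by
    have step1 : (1/2) * ∑ x ∈ S, ∑ y ∈ S, b x y * (φ x * φ y) * (h x - h y) ^ 2
        ≤ (1/2) * ∑ x ∈ S, ∑ y ∈ S, b x y * φ x ^ 2 * (h x - h y) ^ 2 :=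
      mul_le_mul_of_nonneg_left hC2 (by norm_num)
    have step2 : ∑ x ∈ S, ∑ y ∈ S, b x y * φ x ^ 2 * (h x - h y) ^ 2
        ≤ ∑ x ∈ S, φ x ^ 2 * (2 * (γ * g x * w x * m x)) := by
      apply Finset.sum_le_sum
      intro x _
      have : ∑ y ∈ S, b x y * φ x ^ 2 * (h x - h y) ^ 2
          = φ x ^ 2 * ∑ y ∈ S, b x y * (h x - h y) ^ 2 := by
        rw [Finset.mul_sum]
        apply Finset.sum_congr rfl
        intro y _; ring
      rw [this]
      exact mul_le_mul_of_nonneg_left (hFDle x) (sq_nonneg _)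
    have step3 : (1/2) * ∑ x ∈ S, φ x ^ 2 * (2 * (γ * g x * w x * m x)) = γ * A := by
      rw [hAdef, Finset.mul_sum, Finset.mul_sum]
      apply Finset.sum_congr rfl
      intro x _; ring
    linarith
  have hKge : K ≥ (1 - γ) * A := by
    have h1 : Q - P ≤ γ * A := by rw [hQP]; exact hCle
    rw [hKT]
    nlinarith [hHardyA]
  -- Cauchy-Schwarz
  set a : X → ℝ := fun x => Real.sqrt ((g x / w x) * m x) * H φ x with hadef
  set c : X → ℝ := fun x => Real.sqrt (g x * w x * m x) * φ x with hcdef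
  have hac : ∀ x, a x * c x = m x * H φ x * (g x * φ x) := by
    intro x
    have hwne : w x ≠ 0 := (hw x).ne'
    have h1 : Real.sqrt ((g x / w x) * m x) * Real.sqrt (g x * w x * m x) = g x * m x := by
      rw [← Real.sqrt_mul (hgw x),
        show (g x / w x) * m x * (g x * w x * m x) = (g x * m x) ^ 2 by
          field_simp]
      exact Real.sqrt_sq (mul_nonneg (hg x).le (hm x).le)
    calc a x * c x
        = (Real.sqrt ((g x / w x) * m x) * Real.sqrt (g x * w x * m x)) * (H φ x * φ x) := by
          rw [hadef, hcdef]; ring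
      _ = m x * H φ x * (g x * φ x) := by rw [h1]; ring
  have ha2 : ∀ x, a x ^ 2 = (g x / w x) * m x * (H φ x) ^ 2 := by
    intro x
    rw [hadef, mul_pow, Real.sq_sqrt (hgw x)]
  have hc2 : ∀ x, c x ^ 2 = g x * w x * m x * φ x ^ 2 := by
    intro x
    rw [hcdef, mul_pow, Real.sq_sqrt (hgwm x)]
  set L : ℝ := ∑ x ∈ S, (g x / w x) * m x * (H φ x) ^ 2 with hLdef
  have hL0 : 0 ≤ L := Finset.sum_nonneg (fun x _ => mul_nonneg (hgw x) (sq_nonneg _))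
  have hKle : K ≤ Real.sqrt L * Real.sqrt A := by
    have hKac : K = ∑ x ∈ S, a x * c x := by
      rw [hKdef]
      exact Finset.sum_congr rfl (fun x _ => (hac x).symm)
    have hsq : K ^ 2 ≤ L * A := by
      rw [hKac, hLdef, hAdef]
      calc (∑ x ∈ S, a x * c x) ^ 2 ≤ (∑ x ∈ S, a x ^ 2) * ∑ x ∈ S, c x ^ 2 :=
            Finset.sum_mul_sq_le_sq_mul_sq S a c
        _ = (∑ x ∈ S, (g x / w x) * m x * (H φ x) ^ 2) * ∑ x ∈ S, g x * w x * m x * φ x ^ 2 := by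
            rw [Finset.sum_congr rfl (fun x _ => ha2 x), Finset.sum_congr rfl (fun x _ => hc2 x)]
    calc K ≤ |K| := le_abs_self K
      _ = Real.sqrt (K ^ 2) := (Real.sqrt_sq_eq_abs K).symm
      _ ≤ Real.sqrt (L * A) := Real.sqrt_le_sqrt hsq
      _ = Real.sqrt L * Real.sqrt A := Real.sqrt_mul hL0 A
  -- rewrite the goal
  have hLtsum : (∑' x, if φ x = 0 then 0 else (g x / w x) * m x * (H φ x) ^ 2) = L := by
    rw [tsum_eq_sum (s := S) (fun x hx => by rw [if_pos (hφ0 x hx)]), hLdef]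
    apply Finset.sum_congr rfl
    intro x hx
    rw [if_neg ((hmemS x).1 hx)]
  have hAtsum : (∑' x, g x * w x * m x * φ x ^ 2) = A := by
    rw [tsum_eq_sum (s := S) (fun x hx => by rw [hφ0 x hx]; ring)]
  rw [hLtsum, hAtsum]
  rcases eq_or_lt_of_le (Real.sqrt_nonneg A) with hz | hz
  · rw [← hz, mul_zero]
    exact Real.sqrt_nonneg L
  · have h1 : (1 - γ) * (Real.sqrt A * Real.sqrt A) ≤ Real.sqrt L * Real.sqrt A := by
      rw [Real.mul_self_sqrt hA0]
      linarith [hKge, hKle]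
    have h2 : ((1 - γ) * Real.sqrt A) * Real.sqrt A ≤ Real.sqrt L * Real.sqrt A := by
      linarith [h1]
    exact le_of_mul_le_mul_right h2 hz
end

section
/- Let H = (1/m)Δ + q be a positive Schrödinger operator on a connected graph over an infinite set X (∑_X m φ Hφ ≥ 0 for all φ ∈ C_c(X)). Let μ, μ' be measures of full support on X such that the Rellich inequality ‖1_φ Hφ‖_{μ'} ≥ ‖φ‖_μ holds for all φ ∈ C_c(X). Then for every f ∈ ℓ²(X,μ') there exists u ∈ F(X) with Hu = f and ‖u‖_μ ≤ ‖f‖_{μ'}. -/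
open Real

open Finset Function

lemma summable_of_supp_subset {X : Type*} (u : X → ℝ) (S : Finset X)
    (hu : ∀ y ∉ S, u y = 0) : Summable u :=
  summable_of_finite_support ((S.finite_toSet).subset (fun x hx => by
    by_contra h; exact hx (hu x h)))

lemma lem_quad (a c : ℝ) (hc : 0 ≤ c) (h : ∀ t : ℝ, 0 ≤ 2*t*a + t^2*c) : a = 0 := by
  by_contra ha
  have h1 := h (-a/(c+1))
  have hc1 : (0:ℝ) < c + 1 := by linarith
  have ha2 : 0 < a^2 := by positivity
  have e : 2*(-a/(c+1))*a + (-a/(c+1))^2*c = (a^2/(c+1)^2) * (-2*(c+1) + c) := by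
    field_simp
  rw [e] at h1
  have h2 : -2*(c+1)+c < 0 := by linarith
  have hp : 0 < a^2/(c+1)^2 := by positivity
  nlinarith [mul_neg_of_pos_of_neg hp h2]

noncomputable def cc {X : Type*} (b : X → X → ℝ) (x : X) : ℝ := ∑' y, b x y

open Classical in
noncomputable def DD {X : Type*} (b : X → X → ℝ) (m q : X → ℝ) (S : Finset X)
    (φ ψ : X → ℝ) : ℝ :=
  ∑ x ∈ S, ∑ y ∈ S, (((if x = y then cc b x + m x * q x else 0) - b x y) * φ x * ψ y)

lemma D_eq {X : Type*} (b : X → X → ℝ) (m q : X → ℝ) (S : Finset X) (φ ψ : X → ℝ) :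
    DD b m q S φ ψ = (∑ x ∈ S, (cc b x + m x * q x) * φ x * ψ x)
      - ∑ x ∈ S, ∑ y ∈ S, b x y * φ x * ψ y := by
  classical
  rw [DD]
  have hmain : ∀ x ∈ S, ∑ y ∈ S, (((if x = y then cc b x + m x * q x else 0) - b x y) * φ x * ψ y)
      = (cc b x + m x * q x) * φ x * ψ x - ∑ y ∈ S, b x y * φ x * ψ y := by
    intro x hx
    have : ∀ y ∈ S, (((if x = y then cc b x + m x * q x else 0) - b x y) * φ x * ψ y)
        = (if x = y then (cc b x + m x * q x) * φ x * ψ y else 0) - b x y * φ x * ψ y := by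
      intro y hy; split_ifs <;> ring
    rw [Finset.sum_congr rfl this, Finset.sum_sub_distrib, Finset.sum_ite_eq S x
      (fun y => (cc b x + m x * q x) * φ x * ψ y)]
    simp [hx]
  rw [Finset.sum_congr rfl hmain, Finset.sum_sub_distrib]

lemma D_symm {X : Type*} (b : X → X → ℝ) (hsymm : ∀ x y, b x y = b y x)
    (m q : X → ℝ) (S : Finset X) (φ ψ : X → ℝ) :
    DD b m q S φ ψ = DD b m q S ψ φ := by
  classical
  rw [DD, DD, Finset.sum_comm]
  refine Finset.sum_congr rfl fun x hx => Finset.sum_congr rfl fun y hy => ?_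
  by_cases h : x = y
  · subst h; ring
  · have h' : ¬ y = x := fun h2 => h h2.symm
    rw [if_neg h', if_neg h, hsymm y x]; ring

lemma D_mono {X : Type*} (b : X → X → ℝ) (m q : X → ℝ) (S S' : Finset X)
    (hSS' : S ⊆ S') (φ ψ : X → ℝ) (hφ : ∀ y ∉ S, φ y = 0) (hψ : ∀ y ∉ S, ψ y = 0) :
    DD b m q S' φ ψ = DD b m q S φ ψ := by
  classical
  rw [DD, DD]
  rw [← Finset.sum_subset hSS' (fun x _ hx => by simp [hφ x hx])]
  refine Finset.sum_congr rfl fun x hx => ?_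
  rw [← Finset.sum_subset hSS' (fun y _ hy => by simp [hψ y hy])]

lemma D_add_left {X : Type*} (b : X → X → ℝ) (m q : X → ℝ) (S : Finset X)
    (φ₁ φ₂ ψ : X → ℝ) :
    DD b m q S (φ₁ + φ₂) ψ = DD b m q S φ₁ ψ + DD b m q S φ₂ ψ := by
  classical
  rw [DD, DD, DD, ← Finset.sum_add_distrib]
  refine Finset.sum_congr rfl fun x hx => ?_
  rw [← Finset.sum_add_distrib]
  exact Finset.sum_congr rfl fun y hy => by simp only [Pi.add_apply]; ring

lemma D_smul_left {X : Type*} (b : X → X → ℝ) (m q : X → ℝ) (S : Finset X)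
    (a : ℝ) (φ ψ : X → ℝ) :
    DD b m q S (a • φ) ψ = a * DD b m q S φ ψ := by
  classical
  rw [DD, DD, Finset.mul_sum]
  refine Finset.sum_congr rfl fun x hx => ?_
  rw [Finset.mul_sum]
  exact Finset.sum_congr rfl fun y hy => by simp only [Pi.smul_apply, smul_eq_mul]; ring

lemma D_add_right {X : Type*} (b : X → X → ℝ) (m q : X → ℝ) (S : Finset X)
    (φ ψ₁ ψ₂ : X → ℝ) :
    DD b m q S φ (ψ₁ + ψ₂) = DD b m q S φ ψ₁ + DD b m q S φ ψ₂ := by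
  classical
  rw [DD, DD, DD, ← Finset.sum_add_distrib]
  refine Finset.sum_congr rfl fun x hx => ?_
  rw [← Finset.sum_add_distrib]
  exact Finset.sum_congr rfl fun y hy => by simp only [Pi.add_apply]; ring

lemma D_sub_right {X : Type*} (b : X → X → ℝ) (m q : X → ℝ) (S : Finset X)
    (φ ψ₁ ψ₂ : X → ℝ) :
    DD b m q S φ (ψ₁ - ψ₂) = DD b m q S φ ψ₁ - DD b m q S φ ψ₂ := by
  classical
  rw [DD, DD, DD, ← Finset.sum_sub_distrib]
  refine Finset.sum_congr rfl fun x hx => ?_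
  rw [← Finset.sum_sub_distrib]
  exact Finset.sum_congr rfl fun y hy => by simp only [Pi.sub_apply]; ring

lemma D_smul_right {X : Type*} (b : X → X → ℝ) (m q : X → ℝ) (S : Finset X)
    (a : ℝ) (φ ψ : X → ℝ) :
    DD b m q S φ (a • ψ) = a * DD b m q S φ ψ := by
  classical
  rw [DD, DD, Finset.mul_sum]
  refine Finset.sum_congr rfl fun x hx => ?_
  rw [Finset.mul_sum]
  exact Finset.sum_congr rfl fun y hy => by simp only [Pi.smul_apply, smul_eq_mul]; ring

lemma lem_L1 {X : Type*} (b : X → X → ℝ) (m q : X → ℝ) (H : (X → ℝ) → (X → ℝ))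
    (hH : ∀ f x, H f x = (1 / m x) * (∑' y, b x y * (f x - f y)) + q x * f x)
    (hloc : ∀ x, Summable fun y => b x y) (hm : ∀ x, 0 < m x)
    (u : X → ℝ) (S : Finset X) (hu : ∀ y ∉ S, u y = 0) (x : X) :
    m x * H u x = (cc b x + m x * q x) * u x - ∑ y ∈ S, b x y * u y := by
  have h1 : Summable (fun y => b x y * u x) := (hloc x).mul_right (u x)
  have h2 : Summable (fun y => b x y * u y) :=
    summable_of_supp_subset _ S (fun y hy => by rw [hu y hy, mul_zero])
  have h3 : (fun y => b x y * (u x - u y)) = fun y => b x y * u x - b x y * u y :=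
    funext fun y => by ring
  have h4 : ∑' y, b x y * u y = ∑ y ∈ S, b x y * u y :=
    tsum_eq_sum (fun y hy => by rw [hu y hy, mul_zero])
  rw [hH, h3, Summable.tsum_sub h1 h2, tsum_mul_right, h4]
  have hmx : m x ≠ 0 := (hm x).ne'
  show m x * (1 / m x * ((∑' (y : X), b x y) * u x - ∑ y ∈ S, b x y * u y) + q x * u x) = _
  rw [show (∑' (y : X), b x y) = cc b x from rfl]
  field_simp
  ring

lemma lem_DH {X : Type*} (b : X → X → ℝ) (m q : X → ℝ) (H : (X → ℝ) → (X → ℝ))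
    (hH : ∀ f x, H f x = (1 / m x) * (∑' y, b x y * (f x - f y)) + q x * f x)
    (hloc : ∀ x, Summable fun y => b x y) (hm : ∀ x, 0 < m x)
    (φ ψ : X → ℝ) (S : Finset X) (hφ : ∀ y ∉ S, φ y = 0) :
    ∑ x ∈ S, ψ x * (m x * H φ x) = DD b m q S ψ φ := by
  have key : ∀ x ∈ S, ψ x * (m x * H φ x)
      = (cc b x + m x * q x) * ψ x * φ x - ∑ y ∈ S, b x y * ψ x * φ y := by
    intro x hx
    rw [lem_L1 b m q H hH hloc hm φ S hφ x, mul_sub, Finset.mul_sum]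
    congr 1
    · ring
    · exact Finset.sum_congr rfl fun y hy => by ring
  rw [Finset.sum_congr rfl key, Finset.sum_sub_distrib, D_eq]

lemma lem_Dpos {X : Type*} (b : X → X → ℝ) (m q : X → ℝ) (H : (X → ℝ) → (X → ℝ))
    (hH : ∀ f x, H f x = (1 / m x) * (∑' y, b x y * (f x - f y)) + q x * f x)
    (hloc : ∀ x, Summable fun y => b x y) (hm : ∀ x, 0 < m x)
    (hpos : ∀ ψ : X → ℝ, (Function.support ψ).Finite → 0 ≤ ∑' x, m x * ψ x * H ψ x)
    (ψ : X → ℝ) (S : Finset X) (hψ : ∀ y ∉ S, ψ y = 0) :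
    0 ≤ DD b m q S ψ ψ := by
  have hfin : (Function.support ψ).Finite :=
    (S.finite_toSet).subset (fun x hx => by by_contra h; exact hx (hψ x h))
  have h0 := hpos ψ hfin
  rw [tsum_eq_sum (s := S) (fun x hx => by rw [hψ x hx]; ring)] at h0
  calc (0:ℝ) ≤ ∑ x ∈ S, m x * ψ x * H ψ x := h0
    _ = ∑ x ∈ S, ψ x * (m x * H ψ x) := Finset.sum_congr rfl fun x hx => by ring
    _ = DD b m q S ψ ψ := lem_DH b m q H hH hloc hm ψ ψ S hψ

lemma lem_zero {X : Type*} (b : X → X → ℝ) (m q : X → ℝ) (H : (X → ℝ) → (X → ℝ))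
    (μ μ' : X → ℝ) (hμ : ∀ x, 0 < μ x)
    (hRellich : ∀ ψ : X → ℝ, (Function.support ψ).Finite →
      Real.sqrt (∑' x, if ψ x = 0 then 0 else μ' x * (H ψ x) ^ 2)
        ≥ Real.sqrt (∑' x, μ x * ψ x ^ 2))
    (ψ : X → ℝ) (S : Finset X) (hψ : ∀ y ∉ S, ψ y = 0)
    (hHψ : ∀ z, H ψ z = 0) : ∀ x, ψ x = 0 := by
  have hfin : (Function.support ψ).Finite :=
    (S.finite_toSet).subset (fun x hx => by by_contra h; exact hx (hψ x h))
  have hR := hRellich ψ hfin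
  have hL : (fun x => if ψ x = 0 then 0 else μ' x * (H ψ x)^2) = fun x => (0:ℝ) :=
    funext fun x => by rw [hHψ x]; simp
  rw [hL, tsum_zero, Real.sqrt_zero] at hR
  have hsum : Summable (fun x => μ x * ψ x ^ 2) :=
    summable_of_supp_subset _ S (fun y hy => by rw [hψ y hy]; ring)
  have h0 : ∑' x, μ x * ψ x ^ 2 ≤ 0 := by
    by_contra h
    push_neg at h
    have := Real.sqrt_pos.mpr h
    linarith
  intro x
  have h1 : μ x * ψ x ^ 2 ≤ ∑' x, μ x * ψ x ^ 2 :=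
    Summable.le_tsum hsum x (fun y _ => mul_nonneg (hμ y).le (sq_nonneg _))
  have h2 : ψ x ^ 2 = 0 := by nlinarith [hμ x, sq_nonneg (ψ x)]
  exact pow_eq_zero_iff (two_ne_zero) |>.mp h2

lemma lem_Ddef {X : Type*} (b : X → X → ℝ) (m q : X → ℝ) (H : (X → ℝ) → (X → ℝ))
    (hsymm : ∀ x y, b x y = b y x)
    (hH : ∀ f x, H f x = (1 / m x) * (∑' y, b x y * (f x - f y)) + q x * f x)
    (hloc : ∀ x, Summable fun y => b x y) (hm : ∀ x, 0 < m x)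
    (hpos : ∀ ψ : X → ℝ, (Function.support ψ).Finite → 0 ≤ ∑' x, m x * ψ x * H ψ x)
    (μ μ' : X → ℝ) (hμ : ∀ x, 0 < μ x)
    (hRellich : ∀ ψ : X → ℝ, (Function.support ψ).Finite →
      Real.sqrt (∑' x, if ψ x = 0 then 0 else μ' x * (H ψ x) ^ 2)
        ≥ Real.sqrt (∑' x, μ x * ψ x ^ 2))
    (ψ : X → ℝ) (S : Finset X) (hψ : ∀ y ∉ S, ψ y = 0)
    (hD : DD b m q S ψ ψ = 0) : ∀ x, ψ x = 0 := by
  classical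
  have hHψ : ∀ z, H ψ z = 0 := by
    intro z
    set S' : Finset X := insert z S with hS'def
    have hSS' : S ⊆ S' := Finset.subset_insert z S
    have hψ' : ∀ y ∉ S', ψ y = 0 := fun y hy =>
      hψ y (fun h => hy (Finset.mem_insert_of_mem h))
    set δ : X → ℝ := fun w => if w = z then 1 else 0 with hδdef
    have hδ : ∀ y ∉ S', δ y = 0 := fun y hy => by
      have : y ≠ z := fun h => hy (h ▸ Finset.mem_insert_self z S)
      simp [hδdef, this]
    have hDψψ : DD b m q S' ψ ψ = 0 := by
      rw [D_mono b m q S S' hSS' ψ ψ hψ hψ]; exact hD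
    have hc : 0 ≤ DD b m q S' δ δ := lem_Dpos b m q H hH hloc hm hpos δ S' hδ
    have ha : ∀ t : ℝ, 0 ≤ 2*t*(DD b m q S' ψ δ) + t^2 * DD b m q S' δ δ := by
      intro t
      have h1 := lem_Dpos b m q H hH hloc hm hpos (ψ + t • δ) S'
        (fun y hy => by simp [hψ' y hy, hδ y hy])
      simp only [D_add_left, D_add_right, D_smul_left, D_smul_right] at h1
      rw [D_symm b hsymm m q S' δ ψ, hDψψ] at h1
      ring_nf at h1 ⊢
      linarith
    have haz := lem_quad _ _ hc ha
    have hDH := lem_DH b m q H hH hloc hm ψ δ S' hψ'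
    have hsum : ∑ x ∈ S', δ x * (m x * H ψ x) = m z * H ψ z := by
      have key : ∀ x ∈ S', δ x * (m x * H ψ x)
          = if x = z then m x * H ψ x else 0 := by
        intro x hx
        by_cases h : x = z <;> simp [hδdef, h]
      rw [Finset.sum_congr rfl key, Finset.sum_ite_eq' S' z (fun x => m x * H ψ x)]
      simp [hS'def]
    have hfin : m z * H ψ z = 0 := by
      rw [hsum] at hDH
      rw [hDH, ← D_symm b hsymm m q S' ψ δ]
      exact haz
    rcases mul_eq_zero.mp hfin with h | h
    · exact absurd h (hm z).ne'
    · exact h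
  exact lem_zero b m q H μ μ' hμ hRellich ψ S hψ hHψ

lemma lem_min {X : Type*} (b : X → X → ℝ) (m q : X → ℝ) (H : (X → ℝ) → (X → ℝ))
    (hsymm : ∀ x y, b x y = b y x) (hnonneg : ∀ x y, 0 ≤ b x y)
    (hH : ∀ f x, H f x = (1 / m x) * (∑' y, b x y * (f x - f y)) + q x * f x)
    (hloc : ∀ x, Summable fun y => b x y) (hm : ∀ x, 0 < m x)
    (hpos : ∀ ψ : X → ℝ, (Function.support ψ).Finite → 0 ≤ ∑' x, m x * ψ x * H ψ x)
    (μ μ' : X → ℝ) (hμ : ∀ x, 0 < μ x)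
    (hRellich : ∀ ψ : X → ℝ, (Function.support ψ).Finite →
      Real.sqrt (∑' x, if ψ x = 0 then 0 else μ' x * (H ψ x) ^ 2)
        ≥ Real.sqrt (∑' x, μ x * ψ x ^ 2))
    (w : X → ℝ) (S : Finset X) (hw : ∀ y ∉ S, w y = 0)
    (hHw : ∀ x ∈ S, 0 ≤ H w x) : ∀ x, 0 ≤ w x := by
  set p : X → ℝ := fun x => max (w x) 0 with hpdef
  set n : X → ℝ := fun x => max (-(w x)) 0 with hndef
  have hpn : ∀ x, p x - n x = w x := by
    intro x
    rcases le_total 0 (w x) with h | h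
    · rw [hpdef, hndef]
      simp only []
      rw [max_eq_left h, max_eq_right (by linarith : -(w x) ≤ 0)]
      ring
    · rw [hpdef, hndef]
      simp only []
      rw [max_eq_right h, max_eq_left (by linarith : (0:ℝ) ≤ -(w x))]
      ring
  have hn0 : ∀ x, 0 ≤ n x := fun x => le_max_right _ _
  have hp0 : ∀ x, 0 ≤ p x := fun x => le_max_right _ _
  have hnp : ∀ x, n x * p x = 0 := by
    intro x
    rcases le_total 0 (w x) with h | h
    · rw [hndef]; simp only []
      rw [max_eq_right (by linarith : -(w x) ≤ 0)]; ring
    · rw [hpdef]; simp only []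
      rw [max_eq_right h]; ring
  have hnS : ∀ y ∉ S, n y = 0 := fun y hy => by
    rw [hndef]; simp only []; rw [hw y hy]; simp
  have h1 : 0 ≤ ∑ x ∈ S, n x * (m x * H w x) :=
    Finset.sum_nonneg fun x hx => mul_nonneg (hn0 x) (mul_nonneg (hm x).le (hHw x hx))
  have h2 : ∑ x ∈ S, n x * (m x * H w x) = DD b m q S n w :=
    lem_DH b m q H hH hloc hm w n S hw
  have h3 : DD b m q S n w = DD b m q S n p - DD b m q S n n := by
    conv_lhs => rw [show w = p - n from funext fun x => (hpn x).symm]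
    rw [D_sub_right]
  have h4 : DD b m q S n p ≤ 0 := by
    rw [D_eq]
    have d1 : ∑ x ∈ S, (cc b x + m x * q x) * n x * p x = 0 :=
      Finset.sum_eq_zero fun x hx => by rw [mul_assoc, hnp x, mul_zero]
    rw [d1, zero_sub, neg_nonpos]
    exact Finset.sum_nonneg fun x hx => Finset.sum_nonneg fun y hy =>
      mul_nonneg (mul_nonneg (hnonneg x y) (hn0 x)) (hp0 y)
  have h5 : 0 ≤ DD b m q S n n := lem_Dpos b m q H hH hloc hm hpos n S hnS
  have h6 : DD b m q S n n = 0 := by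
    rw [h2, h3] at h1
    linarith
  have h7 := lem_Ddef b m q H hsymm hH hloc hm hpos μ μ' hμ hRellich n S hnS h6
  intro x
  have := hpn x
  have := h7 x
  have := hp0 x
  linarith

lemma lem_solve {X : Type*} (b : X → X → ℝ) (m q : X → ℝ) (H : (X → ℝ) → (X → ℝ))
    (hsymm : ∀ x y, b x y = b y x)
    (hH : ∀ f x, H f x = (1 / m x) * (∑' y, b x y * (f x - f y)) + q x * f x)
    (hloc : ∀ x, Summable fun y => b x y) (hm : ∀ x, 0 < m x)
    (hpos : ∀ ψ : X → ℝ, (Function.support ψ).Finite → 0 ≤ ∑' x, m x * ψ x * H ψ x)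
    (μ μ' : X → ℝ) (hμ : ∀ x, 0 < μ x)
    (hRellich : ∀ ψ : X → ℝ, (Function.support ψ).Finite →
      Real.sqrt (∑' x, if ψ x = 0 then 0 else μ' x * (H ψ x) ^ 2)
        ≥ Real.sqrt (∑' x, μ x * ψ x ^ 2))
    (f : X → ℝ) (S : Finset X) :
    ∃ u : X → ℝ, (∀ y ∉ S, u y = 0) ∧ (∀ x ∈ S, H u x = f x) := by
  classical
  set ext : ({x // x ∈ S} → ℝ) → X → ℝ :=
    fun v x => if h : x ∈ S then v ⟨x, h⟩ else 0 with hextdef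
  have hbridge : ∀ (v : {x // x ∈ S} → ℝ) (x : X),
      ∑ y ∈ S, b x y * ext v y = ∑ y : {x // x ∈ S}, b x (↑y) * v y := by
    intro v x
    rw [← Finset.sum_coe_sort S (fun y => b x y * ext v y)]
    exact Finset.sum_congr rfl fun y _ => by rw [hextdef]; simp [dif_pos y.2]
  set T : ({x // x ∈ S} → ℝ) →ₗ[ℝ] ({x // x ∈ S} → ℝ) :=
    { toFun := fun v x => (cc b (↑x) + m (↑x) * q (↑x)) * v x
        - ∑ y : {x // x ∈ S}, b (↑x) (↑y) * v y,
      map_add' := by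
        intro v w
        funext x
        simp only [Pi.add_apply, mul_add, Finset.sum_add_distrib]
        ring,
      map_smul' := by
        intro a v
        funext x
        simp only [Pi.smul_apply, smul_eq_mul, RingHom.id_apply]
        rw [mul_sub, Finset.mul_sum]
        congr 1
        · ring
        · exact Finset.sum_congr rfl fun y _ => by ring } with hTdef
  have hTapp : ∀ (v : {x // x ∈ S} → ℝ) (x : {x // x ∈ S}),
      T v x = (cc b (↑x) + m (↑x) * q (↑x)) * v x
        - ∑ y : {x // x ∈ S}, b (↑x) (↑y) * v y := fun v x => rfl
  have hkey : ∀ (v : {x // x ∈ S} → ℝ) (x : X) (hx : x ∈ S),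
      m x * H (ext v) x = T v ⟨x, hx⟩ := by
    intro v x hx
    have hu : ∀ y ∉ S, ext v y = 0 := fun y hy => dif_neg hy
    rw [lem_L1 b m q H hH hloc hm (ext v) S hu x, hbridge v x, hTapp]
    have : ext v x = v ⟨x, hx⟩ := dif_pos hx
    rw [this]
  have hinj : ∀ v, T v = 0 → v = 0 := by
    intro v hv
    have hu : ∀ y ∉ S, ext v y = 0 := fun y hy => dif_neg hy
    have hHu : ∀ x ∈ S, m x * H (ext v) x = 0 := by
      intro x hx
      rw [hkey v x hx, hv]
      rfl
    have hD : DD b m q S (ext v) (ext v) = 0 := by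
      rw [← lem_DH b m q H hH hloc hm (ext v) (ext v) S hu]
      exact Finset.sum_eq_zero fun x hx => by rw [hHu x hx, mul_zero]
    have hz := lem_Ddef b m q H hsymm hH hloc hm hpos μ μ' hμ hRellich
      (ext v) S hu hD
    funext y
    have : ext v (↑y) = v y := dif_pos y.2
    rw [← this, hz]
    rfl
  have hinj' : Function.Injective T :=
    LinearMap.ker_eq_bot.mp (LinearMap.ker_eq_bot'.mpr hinj)
  have hsurj := (LinearMap.injective_iff_surjective).mp hinj'
  obtain ⟨v, hv⟩ := hsurj (fun x => m (↑x) * f (↑x))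
  refine ⟨ext v, fun y hy => dif_neg hy, fun x hx => ?_⟩
  have h1 : m x * H (ext v) x = m x * f x := by
    rw [hkey v x hx, hv]
  exact mul_left_cancel₀ (hm x).ne' h1

lemma lem_norm {X : Type*} (b : X → X → ℝ) (m q : X → ℝ) (H : (X → ℝ) → (X → ℝ))
    (μ μ' : X → ℝ) (hμ : ∀ x, 0 < μ x) (hμ' : ∀ x, 0 < μ' x)
    (hRellich : ∀ ψ : X → ℝ, (Function.support ψ).Finite →
      Real.sqrt (∑' x, if ψ x = 0 then 0 else μ' x * (H ψ x) ^ 2)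
        ≥ Real.sqrt (∑' x, μ x * ψ x ^ 2))
    (f : X → ℝ) (hf : Summable fun x => μ' x * f x ^ 2)
    (u : X → ℝ) (S : Finset X) (hu : ∀ y ∉ S, u y = 0)
    (hHu : ∀ x ∈ S, H u x = f x) :
    Summable (fun x => μ x * u x ^ 2) ∧ ∑' x, μ x * u x ^ 2 ≤ ∑' x, μ' x * f x ^ 2 := by
  classical
  have hfin : (Function.support u).Finite :=
    (S.finite_toSet).subset (fun x hx => by by_contra h; exact hx (hu x h))
  have hR := hRellich u hfin
  set g : X → ℝ := fun x => if u x = 0 then 0 else μ' x * (H u x) ^ 2 with hgdef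
  have hg_le : ∀ x, g x ≤ μ' x * f x ^ 2 := by
    intro x
    by_cases h : u x = 0
    · simp only [hgdef, if_pos h]
      exact mul_nonneg (hμ' x).le (sq_nonneg _)
    · have hx : x ∈ S := by by_contra hc; exact h (hu x hc)
      simp only [hgdef, if_neg h, hHu x hx]
      exact le_refl _
  have hg0 : ∀ x, 0 ≤ g x := by
    intro x
    by_cases h : u x = 0
    · simp [hgdef, h]
    · simp only [hgdef, if_neg h]
      exact mul_nonneg (hμ' x).le (sq_nonneg _)
  have hgsum : Summable g := Summable.of_nonneg_of_le hg0 hg_le hf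
  have h2 : ∑' x, g x ≤ ∑' x, μ' x * f x ^ 2 := Summable.tsum_le_tsum hg_le hgsum hf
  have husum : Summable (fun x => μ x * u x ^ 2) :=
    summable_of_supp_subset _ S (fun y hy => by rw [hu y hy]; ring)
  have hgnn : 0 ≤ ∑' x, g x := tsum_nonneg hg0
  have h3 : ∑' x, μ x * u x ^ 2 ≤ ∑' x, g x := (Real.sqrt_le_sqrt_iff hgnn).mp hR
  exact ⟨husum, le_trans h3 h2⟩

lemma lem_mono {X : Type*} (b : X → X → ℝ) (m q : X → ℝ) (H : (X → ℝ) → (X → ℝ))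
    (hsymm : ∀ x y, b x y = b y x) (hnonneg : ∀ x y, 0 ≤ b x y)
    (hH : ∀ f x, H f x = (1 / m x) * (∑' y, b x y * (f x - f y)) + q x * f x)
    (hloc : ∀ x, Summable fun y => b x y) (hm : ∀ x, 0 < m x)
    (hpos : ∀ ψ : X → ℝ, (Function.support ψ).Finite → 0 ≤ ∑' x, m x * ψ x * H ψ x)
    (μ μ' : X → ℝ) (hμ : ∀ x, 0 < μ x)
    (hRellich : ∀ ψ : X → ℝ, (Function.support ψ).Finite →
      Real.sqrt (∑' x, if ψ x = 0 then 0 else μ' x * (H ψ x) ^ 2)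
        ≥ Real.sqrt (∑' x, μ x * ψ x ^ 2))
    (f : X → ℝ) (hf0 : ∀ x, 0 ≤ f x)
    (S S' : Finset X) (hSS' : S ⊆ S')
    (u u' : X → ℝ)
    (hu : ∀ y ∉ S, u y = 0) (hu2 : ∀ x ∈ S, H u x = f x) (hu0 : ∀ x, 0 ≤ u x)
    (hu' : ∀ y ∉ S', u' y = 0) (hu2' : ∀ x ∈ S', H u' x = f x) :
    ∀ x, u x ≤ u' x := by
  set w : X → ℝ := fun x => u' x - u x with hwdef
  have huS' : ∀ y ∉ S', u y = 0 := fun y hy => hu y (fun h => hy (hSS' h))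
  have hwS' : ∀ y ∉ S', w y = 0 := fun y hy => by
    rw [hwdef]; simp only []; rw [hu' y hy, huS' y hy]; ring
  have hHw : ∀ x ∈ S', 0 ≤ H w x := by
    intro x hx
    have hL1w := lem_L1 b m q H hH hloc hm w S' hwS' x
    have hL1u := lem_L1 b m q H hH hloc hm u S' huS' x
    have hL1u' := lem_L1 b m q H hH hloc hm u' S' hu' x
    have hsplit : ∑ y ∈ S', b x y * w y
        = (∑ y ∈ S', b x y * u' y) - ∑ y ∈ S', b x y * u y := by
      rw [← Finset.sum_sub_distrib]
      exact Finset.sum_congr rfl fun y _ => by rw [hwdef]; simp only []; ring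
    have hdiff : m x * H w x = m x * H u' x - m x * H u x := by
      rw [hL1w, hL1u, hL1u', hsplit, hwdef]; simp only []; ring
    have hmHw : 0 ≤ m x * H w x := by
      by_cases hxS : x ∈ S
      · rw [hdiff, hu2 x hxS, hu2' x hx]; ring_nf; exact le_refl 0
      · have h1 : m x * H u' x = m x * f x := by rw [hu2' x hx]
        have h2 : m x * H u x ≤ 0 := by
          rw [hL1u, hu x hxS, mul_zero, zero_sub, neg_nonpos]
          exact Finset.sum_nonneg fun y _ => mul_nonneg (hnonneg x y) (hu0 y)
        have h3 : 0 ≤ m x * f x := mul_nonneg (hm x).le (hf0 x)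
        rw [hdiff, h1]
        linarith
    nlinarith [hm x, hmHw, mul_pos (hm x) (hm x)]
  have := lem_min b m q H hsymm hnonneg hH hloc hm hpos μ μ' hμ hRellich w S' hwS' hHw
  intro x
  have hx := this x
  rw [hwdef] at hx
  simp only [] at hx
  linarith

lemma main_nonneg {X : Type*} [Countable X] [Infinite X]
    (b : X → X → ℝ) (m q : X → ℝ) (H : (X → ℝ) → (X → ℝ))
    (hsymm : ∀ x y, b x y = b y x) (hnonneg : ∀ x y, 0 ≤ b x y)
    (hH : ∀ f x, H f x = (1 / m x) * (∑' y, b x y * (f x - f y)) + q x * f x)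
    (hloc : ∀ x, Summable fun y => b x y) (hm : ∀ x, 0 < m x)
    (hpos : ∀ ψ : X → ℝ, (Function.support ψ).Finite → 0 ≤ ∑' x, m x * ψ x * H ψ x)
    (μ μ' : X → ℝ) (hμ : ∀ x, 0 < μ x) (hμ' : ∀ x, 0 < μ' x)
    (hRellich : ∀ ψ : X → ℝ, (Function.support ψ).Finite →
      Real.sqrt (∑' x, if ψ x = 0 then 0 else μ' x * (H ψ x) ^ 2)
        ≥ Real.sqrt (∑' x, μ x * ψ x ^ 2))
    (f : X → ℝ) (hf : Summable fun x => μ' x * f x ^ 2) (hf0 : ∀ x, 0 ≤ f x) :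
    ∃ u : X → ℝ, (∀ x, 0 ≤ u x) ∧ (∀ x, Summable fun y => b x y * u y) ∧
      (∀ x, H u x = f x) ∧ Summable (fun x => μ x * u x ^ 2) ∧
      ∑' x, μ x * u x ^ 2 ≤ ∑' x, μ' x * f x ^ 2 := by
  classical
  obtain ⟨dX⟩ : Nonempty (Denumerable X) :=
    nonempty_denumerable_iff.mpr ⟨inferInstance, inferInstance⟩
  let e : X ≃ ℕ := @Denumerable.eqv X dX
  set SS : ℕ → Finset X := fun k => (Finset.range k).image (fun i => e.symm i) with hSSdef
  have hSSmono : ∀ {j k : ℕ}, j ≤ k → SS j ⊆ SS k := fun hjk =>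
    Finset.image_subset_image (Finset.range_subset_range.mpr hjk)
  have hmem : ∀ (x : X) (k : ℕ), e x < k → x ∈ SS k := fun x k h =>
    Finset.mem_image.mpr ⟨e x, Finset.mem_range.mpr h, e.symm_apply_apply x⟩
  have hsol : ∀ k : ℕ, ∃ u : X → ℝ, (∀ y ∉ SS k, u y = 0) ∧
      (∀ x ∈ SS k, H u x = f x) ∧ (∀ x, 0 ≤ u x) := by
    intro k
    obtain ⟨u, h1, h2⟩ := lem_solve b m q H hsymm hH hloc hm hpos μ μ' hμ hRellich f (SS k)
    exact ⟨u, h1, h2, lem_min b m q H hsymm hnonneg hH hloc hm hpos μ μ' hμ hRellich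
      u (SS k) h1 (fun x hx => by rw [h2 x hx]; exact hf0 x)⟩
  choose U hU1 hU2 hU3 using hsol
  have hmono : ∀ {j k : ℕ}, j ≤ k → ∀ x, U j x ≤ U k x := fun {j k} hjk =>
    lem_mono b m q H hsymm hnonneg hH hloc hm hpos μ μ' hμ hRellich f hf0
      (SS j) (SS k) (hSSmono hjk) (U j) (U k) (hU1 j) (hU2 j) (hU3 j) (hU1 k) (hU2 k)
  have hnormk : ∀ k, Summable (fun x => μ x * U k x ^ 2) ∧
      ∑' x, μ x * U k x ^ 2 ≤ ∑' x, μ' x * f x ^ 2 := fun k =>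
    lem_norm b m q H μ μ' hμ hμ' hRellich f hf (U k) (SS k) (hU1 k) (hU2 k)
  set C := ∑' x, μ' x * f x ^ 2 with hCdef
  have hbdd : ∀ x, BddAbove (Set.range fun k => U k x) := by
    intro x
    refine ⟨Real.sqrt (C / μ x), ?_⟩
    rintro r ⟨k, rfl⟩
    have h1 : μ x * U k x ^ 2 ≤ C :=
      le_trans (Summable.le_tsum (hnormk k).1 x (fun y _ => mul_nonneg (hμ y).le (sq_nonneg _)))
        (hnormk k).2
    have h2 : U k x ^ 2 ≤ C / μ x := (le_div_iff₀ (hμ x)).mpr (by linarith [mul_comm (μ x) (U k x ^ 2)])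
    calc U k x = Real.sqrt (U k x ^ 2) := by rw [Real.sqrt_sq (hU3 k x)]
      _ ≤ Real.sqrt (C / μ x) := Real.sqrt_le_sqrt h2
  set u : X → ℝ := fun x => ⨆ k, U k x with hudef
  have hmonox : ∀ x, Monotone fun k => U k x := fun x j k hjk => hmono hjk x
  have htend : ∀ x, Filter.Tendsto (fun k => U k x) Filter.atTop (nhds (u x)) :=
    fun x => tendsto_atTop_ciSup (hmonox x) (hbdd x)
  have hUkle : ∀ k x, U k x ≤ u x := fun k x => le_ciSup (hbdd x) k
  have hu0 : ∀ x, 0 ≤ u x := fun x => le_trans (hU3 0 x) (hUkle 0 x)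
  -- норм bound
  have hsum_le : ∀ F : Finset X, ∑ x ∈ F, μ x * u x ^ 2 ≤ C := by
    intro F
    have htF : Filter.Tendsto (fun k => ∑ x ∈ F, μ x * U k x ^ 2) Filter.atTop
        (nhds (∑ x ∈ F, μ x * u x ^ 2)) :=
      tendsto_finset_sum F (fun x _ => ((htend x).pow 2).const_mul (μ x))
    refine le_of_tendsto htF (Filter.Eventually.of_forall fun k => ?_)
    exact le_trans (Summable.sum_le_tsum F (fun y _ => mul_nonneg (hμ y).le (sq_nonneg _)) (hnormk k).1)
      (hnormk k).2
  have husum : Summable (fun x => μ x * u x ^ 2) :=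
    summable_of_sum_le (fun x => mul_nonneg (hμ x).le (sq_nonneg _)) hsum_le
  have hunorm : ∑' x, μ x * u x ^ 2 ≤ C := Summable.tsum_le_of_sum_le husum hsum_le
  -- equation
  have heq : ∀ x, (Summable fun y => b x y * u y) ∧ H u x = f x := by
    intro x
    set N := e x + 1 with hNdef
    have hxSk : ∀ k, N ≤ k → x ∈ SS k := fun k hk =>
      hmem x k (lt_of_lt_of_le (Nat.lt_succ_self _) hk)
    have hUksum : ∀ k, Summable fun y => b x y * U k y := fun k =>
      summable_of_supp_subset _ (SS k) (fun y hy => by rw [hU1 k y hy, mul_zero])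
    have hσeq : ∀ k, N ≤ k → (∑' y, b x y * U k y)
        = (cc b x + m x * q x) * U k x - m x * f x := by
      intro k hk
      have hL1 := lem_L1 b m q H hH hloc hm (U k) (SS k) (hU1 k) x
      rw [hU2 k x (hxSk k hk)] at hL1
      have hts : (∑' y, b x y * U k y) = ∑ y ∈ SS k, b x y * U k y :=
        tsum_eq_sum (fun y hy => by rw [hU1 k y hy, mul_zero])
      rw [hts]
      linarith [hL1]
    set L := (cc b x + m x * q x) * u x - m x * f x with hLdef
    have htendσ : Filter.Tendsto (fun k => ∑' y, b x y * U k y) Filter.atTop (nhds L) := by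
      have h1 : Filter.Tendsto (fun k => (cc b x + m x * q x) * U k x - m x * f x)
          Filter.atTop (nhds L) := ((htend x).const_mul _).sub tendsto_const_nhds
      refine h1.congr' ?_
      exact Filter.eventually_atTop.mpr ⟨N, fun k hk => (hσeq k hk).symm⟩
    have hFle : ∀ F : Finset X, ∑ y ∈ F, b x y * u y ≤ L := by
      intro F
      have htF : Filter.Tendsto (fun k => ∑ y ∈ F, b x y * U k y) Filter.atTop
          (nhds (∑ y ∈ F, b x y * u y)) :=
        tendsto_finset_sum F (fun y _ => (htend y).const_mul _)
      refine le_of_tendsto_of_tendsto' htF htendσ (fun k => ?_)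
      exact Summable.sum_le_tsum F (fun y _ => mul_nonneg (hnonneg x y) (hU3 k y)) (hUksum k)
    have hbusum : Summable (fun y => b x y * u y) :=
      summable_of_sum_le (fun y => mul_nonneg (hnonneg x y) (hu0 y)) hFle
    have hble : ∑' y, b x y * u y ≤ L := Summable.tsum_le_of_sum_le hbusum hFle
    have hgeL : L ≤ ∑' y, b x y * u y := by
      refine le_of_tendsto htendσ (Filter.Eventually.of_forall fun k => ?_)
      exact Summable.tsum_le_tsum (fun y => mul_le_mul_of_nonneg_left (hUkle k y) (hnonneg x y))
        (hUksum k) hbusum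
    have hbeq : ∑' y, b x y * u y = L := le_antisymm hble hgeL
    refine ⟨hbusum, ?_⟩
    have h1 : Summable (fun y => b x y * u x) := (hloc x).mul_right (u x)
    have h3 : (fun y => b x y * (u x - u y)) = fun y => b x y * u x - b x y * u y :=
      funext fun y => by ring
    rw [hH, h3, Summable.tsum_sub h1 hbusum, tsum_mul_right, hbeq, hLdef]
    rw [show (∑' y, b x y) = cc b x from rfl]
    have hmx : m x ≠ 0 := (hm x).ne'
    field_simp
    ring
  exact ⟨u, hu0, fun x => (heq x).1, fun x => (heq x).2, husum, hunorm⟩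


theorem stmt17
    (X : Type*) [Countable X] [Infinite X]
    (b : X → X → ℝ)
    (hsymm : ∀ x y, b x y = b y x)
    (hdiag : ∀ x, b x x = 0)
    (hnonneg : ∀ x y, 0 ≤ b x y)
    (hloc : ∀ x, Summable (fun y => b x y))
    (hconn : ∀ x y : X, Relation.ReflTransGen (fun u v => 0 < b u v) x y)
    (m : X → ℝ) (hm : ∀ x, 0 < m x)
    (q : X → ℝ)
    (H : (X → ℝ) → (X → ℝ))
    (hH : ∀ f x, H f x = (1 / m x) * (∑' y, b x y * (f x - f y)) + q x * f x)
    (hpos : ∀ ψ : X → ℝ, (Function.support ψ).Finite →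
      0 ≤ ∑' x, m x * ψ x * H ψ x)
    (μ μ' : X → ℝ) (hμ : ∀ x, 0 < μ x) (hμ' : ∀ x, 0 < μ' x)
    (hRellich : ∀ ψ : X → ℝ, (Function.support ψ).Finite →
      Real.sqrt (∑' x, if ψ x = 0 then 0 else μ' x * (H ψ x) ^ 2)
        ≥ Real.sqrt (∑' x, μ x * ψ x ^ 2))
    (f : X → ℝ) (hf : Summable (fun x => μ' x * f x ^ 2)) :
    ∃ u : X → ℝ, (∀ x, Summable (fun y => b x y * |u y|)) ∧
      (∀ x, H u x = f x) ∧
      Real.sqrt (∑' x, μ x * u x ^ 2) ≤ Real.sqrt (∑' x, μ' x * f x ^ 2) := by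
  classical
  set fp : X → ℝ := fun x => max (f x) 0 with hfpdef
  set fn : X → ℝ := fun x => max (-(f x)) 0 with hfndef
  have hfp0 : ∀ x, 0 ≤ fp x := fun x => le_max_right _ _
  have hfn0 : ∀ x, 0 ≤ fn x := fun x => le_max_right _ _
  have hfpn : ∀ x, fp x - fn x = f x := by
    intro x
    rcases le_total 0 (f x) with h | h
    · rw [hfpdef, hfndef]; simp only []
      rw [max_eq_left h, max_eq_right (by linarith : -(f x) ≤ 0)]; ring
    · rw [hfpdef, hfndef]; simp only []
      rw [max_eq_right h, max_eq_left (by linarith : (0:ℝ) ≤ -(f x))]; ring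
  have hfsplit : ∀ x, μ' x * fp x ^ 2 + μ' x * fn x ^ 2 = μ' x * f x ^ 2 := by
    intro x
    rcases le_total 0 (f x) with h | h
    · rw [hfpdef, hfndef]; simp only []
      rw [max_eq_left h, max_eq_right (by linarith : -(f x) ≤ 0)]; ring
    · rw [hfpdef, hfndef]; simp only []
      rw [max_eq_right h, max_eq_left (by linarith : (0:ℝ) ≤ -(f x))]; ring
  have hsp : Summable (fun x => μ' x * fp x ^ 2) := by
    refine Summable.of_nonneg_of_le (fun x => mul_nonneg (hμ' x).le (sq_nonneg _))
      (fun x => ?_) hf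
    have : fp x ^ 2 ≤ f x ^ 2 := by
      rcases le_total 0 (f x) with h | h
      · rw [hfpdef]; simp only []; rw [max_eq_left h]
      · rw [hfpdef]; simp only []; rw [max_eq_right h]; nlinarith [sq_nonneg (f x)]
    exact mul_le_mul_of_nonneg_left this (hμ' x).le
  have hsn : Summable (fun x => μ' x * fn x ^ 2) := by
    refine Summable.of_nonneg_of_le (fun x => mul_nonneg (hμ' x).le (sq_nonneg _))
      (fun x => ?_) hf
    have : fn x ^ 2 ≤ f x ^ 2 := by
      rcases le_total 0 (f x) with h | h
      · rw [hfndef]; simp only []; rw [max_eq_right (by linarith : -(f x) ≤ 0)]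
        nlinarith [sq_nonneg (f x)]
      · rw [hfndef]; simp only []; rw [max_eq_left (by linarith : (0:ℝ) ≤ -(f x))]
        nlinarith [sq_nonneg (f x)]
    exact mul_le_mul_of_nonneg_left this (hμ' x).le
  obtain ⟨up, hup0, hbp, hHp, hsump, hnormp⟩ :=
    main_nonneg b m q H hsymm hnonneg hH hloc hm hpos μ μ' hμ hμ' hRellich fp hsp hfp0
  obtain ⟨un, hun0, hbn, hHn, hsumn, hnormn⟩ :=
    main_nonneg b m q H hsymm hnonneg hH hloc hm hpos μ μ' hμ hμ' hRellich fn hsn hfn0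
  refine ⟨fun x => up x - un x, ?_, ?_, ?_⟩
  · intro x
    have hdom : Summable (fun y => b x y * (up y + un y)) := by
      have : (fun y => b x y * (up y + un y)) = fun y => b x y * up y + b x y * un y :=
        funext fun y => by ring
      rw [this]
      exact (hbp x).add (hbn x)
    refine Summable.of_nonneg_of_le (fun y => mul_nonneg (hnonneg x y) (abs_nonneg _))
      (fun y => ?_) hdom
    exact mul_le_mul_of_nonneg_left
      (le_trans (abs_sub _ _) (by rw [abs_of_nonneg (hup0 y), abs_of_nonneg (hun0 y)]))
      (hnonneg x y)
  · intro x
    have hbup : Summable (fun y => b x y * up y) := hbp x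
    have hbun : Summable (fun y => b x y * un y) := hbn x
    have sp : Summable (fun y => b x y * (up x - up y)) := by
      have : (fun y => b x y * (up x - up y)) = fun y => b x y * up x - b x y * up y :=
        funext fun y => by ring
      rw [this]
      exact ((hloc x).mul_right (up x)).sub hbup
    have sn : Summable (fun y => b x y * (un x - un y)) := by
      have : (fun y => b x y * (un x - un y)) = fun y => b x y * un x - b x y * un y :=
        funext fun y => by ring
      rw [this]
      exact ((hloc x).mul_right (un x)).sub hbun
    have hid : (fun y => b x y * ((fun x => up x - un x) x - (fun x => up x - un x) y))
        = fun y => b x y * (up x - up y) - b x y * (un x - un y) :=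
      funext fun y => by simp only []; ring
    have e1 := hHp x
    have e2 := hHn x
    rw [hH] at e1 e2
    rw [hH, hid, Summable.tsum_sub sp sn]
    linear_combination e1 - e2 + hfpn x
  · apply Real.sqrt_le_sqrt
    have hsq : ∀ x, μ x * (up x - un x) ^ 2 ≤ μ x * up x ^ 2 + μ x * un x ^ 2 := by
      intro x
      nlinarith [mul_nonneg (mul_nonneg (hμ x).le (hup0 x)) (hun0 x)]
    have hg : Summable (fun x => μ x * up x ^ 2 + μ x * un x ^ 2) := hsump.add hsumn
    have husum : Summable (fun x => μ x * (up x - un x) ^ 2) :=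
      Summable.of_nonneg_of_le (fun x => mul_nonneg (hμ x).le (sq_nonneg _)) hsq hg
    calc ∑' x, μ x * (up x - un x) ^ 2
        ≤ ∑' x, (μ x * up x ^ 2 + μ x * un x ^ 2) := Summable.tsum_le_tsum hsq husum hg
      _ = (∑' x, μ x * up x ^ 2) + ∑' x, μ x * un x ^ 2 := Summable.tsum_add hsump hsumn
      _ ≤ (∑' x, μ' x * fp x ^ 2) + ∑' x, μ' x * fn x ^ 2 := add_le_add hnormp hnormn
      _ = ∑' x, (μ' x * fp x ^ 2 + μ' x * fn x ^ 2) := (Summable.tsum_add hsp hsn).symm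
      _ = ∑' x, μ' x * f x ^ 2 := tsum_congr hfsplit
end
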